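/- arXiv:2402.16704 — 8 statements merged into one kernel-verified Lean document; each statement's English description precedes it below -/
import Mathlib

section
/- Let H be a Hopf algebra over a field k, and let m : H ⊗ H → H be a coalgebra morphism satisfying m(a ⊗ bc) = m(a₁ ⊗ b)·m(a₂ ⊗ c) for all a,b,c ∈ H (Sweedler notation). Then m(a ⊗ 1) = ε(a)·1 for all a ∈ H. -/
open TensorProduct

noncomputable def mbar (k : Type*) {H : Type*} [Field k] [Ring H] [HopfAlgebra k H]
    (Φ : H →ₗ[k] H) (m : H ⊗[k] H →ₗ[k] H) : H ⊗[k] H →ₗ[k] H :=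
  (LinearMap.mul' k H) ∘ₗ (TensorProduct.map Φ m) ∘ₗ
    (TensorProduct.assoc k H H H).toLinearMap ∘ₗ
    (TensorProduct.map Coalgebra.comul LinearMap.id)

/-!
Since `1` is group-like, `f := m(· ⊗ 1)` is a coalgebra endomorphism of `H`, and the
multiplicativity of `m` in its second argument, at `b = c = 1`, says that `f` is idempotent for
the convolution product. A coalgebra map into a Hopf algebra is convolution-invertible, with
inverse `S ∘ f`, and the only invertible idempotent is the convolution unit `a ↦ ε(a) • 1`.
-/

open Coalgebra WithConv

namespace CoalgHom

section Tensor

variable {R A B C : Type*} [CommSemiring R] [AddCommMonoid A] [Module R A] [Coalgebra R A]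
  [AddCommMonoid B] [Module R B] [Coalgebra R B] [AddCommMonoid C] [Module R C] [Coalgebra R C]

noncomputable def ofTensorProduct (m : A ⊗[R] B →ₗ[R] C)
    (hm_comul : comul ∘ₗ m = map m m ∘ₗ (tensorTensorTensorComm R A A B B).toLinearMap
      ∘ₗ map comul comul)
    (hm_counit : counit ∘ₗ m = (TensorProduct.lid R R).toLinearMap ∘ₗ map counit counit) :
    A ⊗[R] B →ₗc[R] C where
  toLinearMap := m
  counit_comp := by
    ext a b
    simpa [mul_comm] using congr($hm_counit (a ⊗ₜ b))
  map_comp_comul := hm_comul.symm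

@[simp]
lemma ofTensorProduct_apply (m : A ⊗[R] B →ₗ[R] C) (hm_comul) (hm_counit) (x : A ⊗[R] B) :
    ofTensorProduct m hm_comul hm_counit x = m x :=
  rfl

end Tensor

section Hopf

variable {R C H : Type*} [CommSemiring R] [AddCommMonoid C] [Module R C] [Coalgebra R C]
  [Semiring H] [HopfAlgebra R H]

lemma ofConv_one_comp (φ : C →ₗc[R] H) :
    (1 : WithConv (H →ₗ[R] H)).ofConv ∘ₗ φ.toLinearMap =
      (1 : WithConv (C →ₗ[R] H)).ofConv := by
  ext c
  simp

lemma isUnit_toConv (φ : C →ₗc[R] H) : IsUnit (toConv φ.toLinearMap) := by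
  refine isUnit_iff_exists.mpr ⟨toConv (HopfAlgebra.antipode R ∘ₗ φ.toLinearMap), ?_, ?_⟩
  · have h := LinearMap.convMul_comp_coalgHom_distrib (toConv LinearMap.id)
      (toConv (HopfAlgebra.antipode R (A := H))) φ
    rw [LinearMap.id_mul_antipode] at h
    exact ofConv_injective (h.symm.trans φ.ofConv_one_comp)
  · have h := LinearMap.convMul_comp_coalgHom_distrib (toConv (HopfAlgebra.antipode R (A := H)))
      (toConv LinearMap.id) φ
    rw [LinearMap.antipode_mul_id] at h
    exact ofConv_injective (h.symm.trans φ.ofConv_one_comp)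

lemma toConv_eq_one_of_isIdempotentElem (φ : C →ₗc[R] H)
    (hφ : IsIdempotentElem (toConv φ.toLinearMap)) : toConv φ.toLinearMap = 1 :=
  (IsIdempotentElem.iff_eq_one_of_isUnit φ.isUnit_toConv).mp hφ

end Hopf

end CoalgHom

lemma isIdempotentElem_toConv_comp_flip_mk_one {R A H : Type*} [CommSemiring R]
    [AddCommMonoid A] [Module R A] [Coalgebra R A] [Semiring H] [Algebra R H]
    (m : A ⊗[R] H →ₗ[R] H)
    (hm_mul : m ∘ₗ map LinearMap.id (LinearMap.mul' R H) =
      LinearMap.mul' R H ∘ₗ map m m ∘ₗ (tensorTensorTensorComm R A A H H).toLinearMap ∘ₗ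
        map comul LinearMap.id) :
    IsIdempotentElem (toConv (m ∘ₗ (mk R A H).flip 1)) := by
  ext x
  have h := congr($hm_mul (x ⊗ₜ (1 ⊗ₜ 1)))
  rw [(ℛ R x).convMul_apply]
  simp only [LinearMap.coe_comp, Function.comp_apply, LinearEquiv.coe_coe, TensorProduct.map_tmul,
    LinearMap.id_coe, id_eq, LinearMap.mul'_apply, mul_one, ← (ℛ R x).eq, sum_tmul, map_sum,
    tensorTensorTensorComm_tmul] at h
  simpa using h.symm

theorem stmt0 (k H : Type*) [Field k] [Ring H] [HopfAlgebra k H]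
    (m : H ⊗[k] H →ₗ[k] H)
    (hm_comul : Coalgebra.comul ∘ₗ m
      = (TensorProduct.map m m) ∘ₗ (TensorProduct.tensorTensorTensorComm k H H H H).toLinearMap
          ∘ₗ (TensorProduct.map Coalgebra.comul Coalgebra.comul))
    (hm_counit : Coalgebra.counit ∘ₗ m
      = (TensorProduct.lid k k).toLinearMap ∘ₗ
          TensorProduct.map Coalgebra.counit Coalgebra.counit)
    (h5 : m ∘ₗ TensorProduct.map LinearMap.id (LinearMap.mul' k H)
      = (LinearMap.mul' k H) ∘ₗ TensorProduct.map m m ∘ₗ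
          (TensorProduct.tensorTensorTensorComm k H H H H).toLinearMap ∘ₗ
          TensorProduct.map Coalgebra.comul LinearMap.id) :
    ∀ a : H, m (a ⊗ₜ[k] (1 : H)) = (Coalgebra.counit (R := k) a) • (1 : H) := by
  intro a
  let f : H →ₗc[k] H := (CoalgHom.ofTensorProduct m hm_comul hm_counit).comp
    ((Coalgebra.TensorProduct.map (CoalgHom.id k H)
      (Bialgebra.unitBialgHom k H : k →ₗc[k] H)).comp
      (Coalgebra.TensorProduct.rid k k H).symm.toCoalgHom)
  have hf : f.toLinearMap = m ∘ₗ (mk k H H).flip 1 := by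
    ext x
    simp [f]
  have hf_one : toConv (m ∘ₗ (mk k H H).flip 1) = 1 :=
    hf ▸ f.toConv_eq_one_of_isIdempotentElem
      (hf ▸ isIdempotentElem_toConv_comp_flip_mk_one m h5)
  simpa [Algebra.smul_def] using congr($hf_one a)
end

section
/- Let (H, m, Φ) be a weak twisted post-Hopf algebra over a field k, with H cocommutative, and set μ̄(a ⊗ b) := Φ(a₁)·m(a₂ ⊗ b). Then μ̄ is a coalgebra morphism, i.e., δ(μ̄(a ⊗ b)) = μ̄(a₁ ⊗ b₁) ⊗ μ̄(a₂ ⊗ b₂) and ε(μ̄(a ⊗ b)) = ε(a)ε(b) for all a,b ∈ H. -/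
open TensorProduct
set_option synthInstance.maxHeartbeats 1000000
set_option maxHeartbeats 1600000

section PureAux

variable {R : Type*} [CommSemiring R]
variable {M₁ M₂ M₃ M₄ N₁ N₂ N₃ N₄ : Type*}
  [AddCommMonoid M₁] [AddCommMonoid M₂] [AddCommMonoid M₃] [AddCommMonoid M₄]
  [AddCommMonoid N₁] [AddCommMonoid N₂] [AddCommMonoid N₃] [AddCommMonoid N₄]
  [Module R M₁] [Module R M₂] [Module R M₃] [Module R M₄]
  [Module R N₁] [Module R N₂] [Module R N₃] [Module R N₄]

theorem aux_tttc_nat (f : M₁ →ₗ[R] N₁) (g : M₂ →ₗ[R] N₂) (h : M₃ →ₗ[R] N₃) (l : M₄ →ₗ[R] N₄) :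
    (tensorTensorTensorComm R N₁ N₂ N₃ N₄).toLinearMap ∘ₗ map (map f g) (map h l)
      = map (map f h) (map g l) ∘ₗ (tensorTensorTensorComm R M₁ M₂ M₃ M₄).toLinearMap := by
  apply TensorProduct.ext_fourfold'
  intro w x y z
  simp

theorem aux_assoc_nat (f : M₁ →ₗ[R] N₁) (g : M₂ →ₗ[R] N₂) (h : M₃ →ₗ[R] N₃) :
    (TensorProduct.assoc R N₁ N₂ N₃).toLinearMap ∘ₗ map (map f g) h
      = map f (map g h) ∘ₗ (TensorProduct.assoc R M₁ M₂ M₃).toLinearMap := by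
  apply TensorProduct.ext_threefold
  intro x y z
  simp

theorem aux_map_map_apply (f : M₂ →ₗ[R] M₃) (g : N₂ →ₗ[R] N₃) (h : M₁ →ₗ[R] M₂)
    (l : N₁ →ₗ[R] N₂) (x : M₁ ⊗[R] N₁) :
    map f g (map h l x) = map (f ∘ₗ h) (g ∘ₗ l) x := by
  rw [TensorProduct.map_comp]; rfl

theorem aux_symm_nat {A B C C' : Type*}
    [AddCommMonoid A] [AddCommMonoid B] [AddCommMonoid C] [AddCommMonoid C']
    [Module R A] [Module R B] [Module R C] [Module R C']
    (f : C →ₗ[R] C') (z : A ⊗[R] (B ⊗[R] C)) :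
    map LinearMap.id f ((TensorProduct.assoc R A B C).symm z)
      = (TensorProduct.assoc R A B C').symm (map LinearMap.id (map LinearMap.id f) z) := by
  induction z using TensorProduct.induction_on with
  | zero => simp
  | add u v hu hv => simp only [map_add, hu, hv]
  | tmul a y =>
    induction y using TensorProduct.induction_on with
    | zero => simp
    | add u v hu hv => simp only [tmul_add, map_add, hu, hv]
    | tmul b c => simp

theorem aux_shuffle {A B C D Y Z : Type*}
    [AddCommMonoid A] [AddCommMonoid B] [AddCommMonoid C] [AddCommMonoid D]
    [AddCommMonoid Y] [AddCommMonoid Z]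
    [Module R A] [Module R B] [Module R C] [Module R D] [Module R Y] [Module R Z]
    (v : ((A ⊗[R] B) ⊗[R] (C ⊗[R] D)) ⊗[R] (Y ⊗[R] Z)) :
    map (TensorProduct.assoc R A B Y).toLinearMap (TensorProduct.assoc R C D Z).toLinearMap
      (tensorTensorTensorComm R (A ⊗[R] B) (C ⊗[R] D) Y Z v)
    = tensorTensorTensorComm R A C (B ⊗[R] Y) (D ⊗[R] Z)
        (map LinearMap.id (tensorTensorTensorComm R B D Y Z).toLinearMap
          (TensorProduct.assoc R (A ⊗[R] C) (B ⊗[R] D) (Y ⊗[R] Z)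
            (map (tensorTensorTensorComm R A B C D).toLinearMap LinearMap.id v))) := by
  induction v using TensorProduct.induction_on with
  | zero => simp
  | add u v hu hv => simp only [map_add, hu, hv]
  | tmul x y =>
    induction x using TensorProduct.induction_on with
    | zero => simp
    | add u v hu hv => simp only [add_tmul, map_add, hu, hv]
    | tmul x1 x2 =>
      induction y using TensorProduct.induction_on with
      | zero => simp
      | add u v hu hv => simp only [tmul_add, map_add, hu, hv]
      | tmul y1 y2 =>
        induction x1 using TensorProduct.induction_on with
        | zero => simp
        | add u v hu hv => simp only [add_tmul, map_add, hu, hv]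
        | tmul a b =>
          induction x2 using TensorProduct.induction_on with
          | zero => simp
          | add u v hu hv => simp only [add_tmul, tmul_add, map_add, hu, hv]
          | tmul c d => simp

theorem aux_C2 {A B C D : Type*}
    [AddCommMonoid A] [AddCommMonoid B] [AddCommMonoid C] [AddCommMonoid D]
    [Module R A] [Module R B] [Module R C] [Module R D]
    (y : A ⊗[R] ((B ⊗[R] C) ⊗[R] D)) :
    tensorTensorTensorComm R A B C D
      ((TensorProduct.assoc R A B (C ⊗[R] D)).symm
        (map LinearMap.id (TensorProduct.assoc R B C D).toLinearMap y))
    = (TensorProduct.assoc R A C (B ⊗[R] D)).symm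
        (map LinearMap.id (TensorProduct.assoc R C B D).toLinearMap
          (map LinearMap.id (map (TensorProduct.comm R B C).toLinearMap LinearMap.id) y)) := by
  induction y using TensorProduct.induction_on with
  | zero => simp
  | add u v hu hv => simp only [map_add, hu, hv]
  | tmul a y =>
    induction y using TensorProduct.induction_on with
    | zero => simp
    | add u v hu hv => simp only [tmul_add, map_add, hu, hv]
    | tmul bc d =>
      induction bc using TensorProduct.induction_on with
      | zero => simp
      | add u v hu hv => simp only [add_tmul, tmul_add, map_add, hu, hv]
      | tmul b c => simp

end PureAux

section HopfAux

variable {k H : Type*} [Field k] [Ring H] [HopfAlgebra k H]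

theorem aux_valmul (x y : H ⊗[k] H) :
    map (LinearMap.mul' k H) (LinearMap.mul' k H)
      (tensorTensorTensorComm k H H H H (x ⊗ₜ[k] y)) = x * y := by
  induction x using TensorProduct.induction_on with
  | zero => simp
  | add u v hu hv => simp only [add_tmul, map_add, hu, hv, add_mul]
  | tmul a b =>
    induction y using TensorProduct.induction_on with
    | zero => simp
    | add u v hu hv => simp only [tmul_add, map_add, hu, hv, mul_add]
    | tmul c d =>
      simp [Algebra.TensorProduct.tmul_mul_tmul]

theorem aux_comul_mul (x : H ⊗[k] H) :
    Coalgebra.comul (LinearMap.mul' k H x)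
      = map (LinearMap.mul' k H) (LinearMap.mul' k H)
          (tensorTensorTensorComm k H H H H
            (map Coalgebra.comul Coalgebra.comul x)) := by
  induction x using TensorProduct.induction_on with
  | zero => simp
  | add u v hu hv => simp only [map_add, hu, hv]
  | tmul a b => rw [map_tmul, aux_valmul]; simp

theorem aux_counit_mul (x : H ⊗[k] H) :
    Coalgebra.counit (LinearMap.mul' k H x)
      = LinearMap.mul' k k (map Coalgebra.counit Coalgebra.counit x) := by
  induction x using TensorProduct.induction_on with
  | zero => simp
  | add u v hu hv => simp only [map_add, hu, hv]
  | tmul a b => simp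

end HopfAux

theorem stmt3 (k H : Type*) [Field k] [Ring H] [HopfAlgebra k H]
    (m : H ⊗[k] H →ₗ[k] H) (Φ : H →ₗ[k] H)
    (hm_comul : Coalgebra.comul ∘ₗ m
      = (TensorProduct.map m m) ∘ₗ (TensorProduct.tensorTensorTensorComm k H H H H).toLinearMap
          ∘ₗ (TensorProduct.map Coalgebra.comul Coalgebra.comul))
    (hm_counit : Coalgebra.counit ∘ₗ m
      = (TensorProduct.lid k k).toLinearMap ∘ₗ
          TensorProduct.map Coalgebra.counit Coalgebra.counit)
    (hΦ_comul : Coalgebra.comul ∘ₗ Φ = TensorProduct.map Φ Φ ∘ₗ Coalgebra.comul)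
    (hΦ_counit : Coalgebra.counit ∘ₗ Φ = Coalgebra.counit)
    (h3 : Φ ∘ₗ mbar k Φ m = mbar k Φ m ∘ₗ TensorProduct.map LinearMap.id Φ)
    (h4 : m ∘ₗ TensorProduct.map LinearMap.id m
      = m ∘ₗ TensorProduct.map (mbar k Φ m) LinearMap.id ∘ₗ
          (TensorProduct.assoc k H H H).symm.toLinearMap)
    (h5 : m ∘ₗ TensorProduct.map LinearMap.id (LinearMap.mul' k H)
      = (LinearMap.mul' k H) ∘ₗ TensorProduct.map m m ∘ₗ
          (TensorProduct.tensorTensorTensorComm k H H H H).toLinearMap ∘ₗ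
          TensorProduct.map Coalgebra.comul LinearMap.id)
    (hcoc : ∀ a : H, (TensorProduct.comm k H H) (Coalgebra.comul (R := k) a)
      = Coalgebra.comul a)
    :
    (Coalgebra.comul ∘ₗ mbar k Φ m
      = (TensorProduct.map (mbar k Φ m) (mbar k Φ m)) ∘ₗ
          (TensorProduct.tensorTensorTensorComm k H H H H).toLinearMap ∘ₗ
          (TensorProduct.map Coalgebra.comul Coalgebra.comul)) ∧
    (Coalgebra.counit ∘ₗ mbar k Φ m
      = (TensorProduct.lid k k).toLinearMap ∘ₗ
          TensorProduct.map Coalgebra.counit Coalgebra.counit) := by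
  have hτδ : (TensorProduct.comm k H H).toLinearMap ∘ₗ
      (Coalgebra.comul : H →ₗ[k] H ⊗[k] H) = Coalgebra.comul :=
    LinearMap.ext fun a => by simpa using hcoc a
  have hαα : (TensorProduct.assoc k H H H).toLinearMap ∘ₗ
      (TensorProduct.assoc k H H H).symm.toLinearMap
      = (LinearMap.id : H ⊗[k] (H ⊗[k] H) →ₗ[k] H ⊗[k] (H ⊗[k] H)) :=
    LinearMap.ext fun u => by simp
  -- C1: factor the double comultiplication through the "middle" comultiplication
  have C1 : ∀ b : H, map Coalgebra.comul Coalgebra.comul (Coalgebra.comul (R := k) b)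
      = (TensorProduct.assoc k H H (H ⊗[k] H)).symm
          (map LinearMap.id (TensorProduct.assoc k H H H).toLinearMap
            (map LinearMap.id
              (map Coalgebra.comul LinearMap.id ∘ₗ Coalgebra.comul)
              (Coalgebra.comul b))) := by
    intro b
    have inner2 : (map Coalgebra.comul LinearMap.id ∘ₗ (Coalgebra.comul : H →ₗ[k] H ⊗[k] H))
        = (TensorProduct.assoc k H H H).symm.toLinearMap ∘ₗ
            (map LinearMap.id Coalgebra.comul ∘ₗ Coalgebra.comul) :=
      LinearMap.ext fun c => (Coalgebra.coassoc_symm_apply c).symm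
    rw [inner2]
    have s1 : map (LinearMap.id : H →ₗ[k] H)
        ((TensorProduct.assoc k H H H).symm.toLinearMap ∘ₗ
          (map LinearMap.id Coalgebra.comul ∘ₗ Coalgebra.comul)) (Coalgebra.comul b)
        = map LinearMap.id (TensorProduct.assoc k H H H).symm.toLinearMap
            (map LinearMap.id (map LinearMap.id Coalgebra.comul ∘ₗ Coalgebra.comul)
              (Coalgebra.comul b)) := by
      rw [aux_map_map_apply, LinearMap.id_comp]
    rw [s1]
    have s2 : ∀ u : H ⊗[k] (H ⊗[k] (H ⊗[k] H)),
        map LinearMap.id (TensorProduct.assoc k H H H).toLinearMap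
          (map LinearMap.id (TensorProduct.assoc k H H H).symm.toLinearMap u) = u := fun u => by
      induction u using TensorProduct.induction_on with
      | zero => simp
      | add a b ha hb => simp only [map_add, ha, hb]
      | tmul x y => simp
    rw [s2]
    have s3 : map (LinearMap.id : H →ₗ[k] H)
        (map LinearMap.id Coalgebra.comul ∘ₗ Coalgebra.comul) (Coalgebra.comul b)
        = map LinearMap.id (map LinearMap.id Coalgebra.comul)
            (map LinearMap.id Coalgebra.comul (Coalgebra.comul b)) := by
      rw [aux_map_map_apply, LinearMap.id_comp]
    rw [s3, ← aux_symm_nat]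
    rw [show (TensorProduct.assoc k H H H).symm
          (map LinearMap.id Coalgebra.comul (Coalgebra.comul b))
        = map Coalgebra.comul LinearMap.id (Coalgebra.comul b) from
      Coalgebra.coassoc_symm_apply b]
    rw [aux_map_map_apply, LinearMap.id_comp, LinearMap.comp_id]
  have τstep : map (TensorProduct.comm k H H).toLinearMap LinearMap.id ∘ₗ
      (map Coalgebra.comul LinearMap.id ∘ₗ (Coalgebra.comul : H →ₗ[k] H ⊗[k] H))
      = map Coalgebra.comul LinearMap.id ∘ₗ Coalgebra.comul := by
    rw [← LinearMap.comp_assoc, ← TensorProduct.map_comp, hτδ, LinearMap.id_comp]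
  have L4 : (tensorTensorTensorComm k H H H H).toLinearMap ∘ₗ
      (map Coalgebra.comul Coalgebra.comul ∘ₗ (Coalgebra.comul : H →ₗ[k] H ⊗[k] H))
      = map Coalgebra.comul Coalgebra.comul ∘ₗ Coalgebra.comul := by
    refine LinearMap.ext fun b => ?_
    simp only [LinearMap.comp_apply, LinearEquiv.coe_coe]
    have s4 : ∀ x : H ⊗[k] H,
        map LinearMap.id (map (TensorProduct.comm k H H).toLinearMap LinearMap.id)
          (map LinearMap.id (map Coalgebra.comul LinearMap.id ∘ₗ Coalgebra.comul) x)
        = map LinearMap.id (map Coalgebra.comul LinearMap.id ∘ₗ Coalgebra.comul) x := fun x => by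
      rw [aux_map_map_apply, LinearMap.id_comp, τstep]
    rw [C1 b, aux_C2, s4]
  constructor
  · refine LinearMap.ext fun w => ?_
    simp only [mbar, TensorProduct.map_comp, LinearMap.comp_apply, LinearEquiv.coe_coe]
    -- LHS
    rw [aux_comul_mul]
    rw [aux_map_map_apply Coalgebra.comul Coalgebra.comul Φ m]
    rw [hΦ_comul, hm_comul]
    rw [← aux_map_map_apply (map Φ Φ) (map m m) Coalgebra.comul
        ((tensorTensorTensorComm k H H H H).toLinearMap ∘ₗ map Coalgebra.comul Coalgebra.comul)]
    have t1 : ∀ x : (H ⊗[k] H) ⊗[k] ((H ⊗[k] H) ⊗[k] (H ⊗[k] H)),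
        tensorTensorTensorComm k H H H H (map (map Φ Φ) (map m m) x)
          = map (map Φ m) (map Φ m)
              (tensorTensorTensorComm k H H (H ⊗[k] H) (H ⊗[k] H) x) := fun x => by
      have := LinearMap.congr_fun (aux_tttc_nat (R := k) Φ Φ m m) x
      simpa using this
    rw [t1]
    have t2 : ∀ y : H ⊗[k] (H ⊗[k] H),
        map Coalgebra.comul
          ((tensorTensorTensorComm k H H H H).toLinearMap ∘ₗ map Coalgebra.comul Coalgebra.comul) y
        = map LinearMap.id (tensorTensorTensorComm k H H H H).toLinearMap
            (map Coalgebra.comul (map Coalgebra.comul Coalgebra.comul) y) := fun y => by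
      rw [aux_map_map_apply, LinearMap.id_comp]
    rw [t2]
    have t3 : ∀ y : (H ⊗[k] H) ⊗[k] H,
        map Coalgebra.comul (map Coalgebra.comul Coalgebra.comul)
            (TensorProduct.assoc k H H H y)
          = TensorProduct.assoc k (H ⊗[k] H) (H ⊗[k] H) (H ⊗[k] H)
              (map (map Coalgebra.comul Coalgebra.comul) Coalgebra.comul y) := fun y => by
      have := LinearMap.congr_fun
        (aux_assoc_nat (R := k) (Coalgebra.comul (A := H)) Coalgebra.comul Coalgebra.comul) y
      simp only [LinearMap.comp_apply, LinearEquiv.coe_coe] at this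
      exact this.symm
    rw [t3]
    rw [aux_map_map_apply (map Coalgebra.comul Coalgebra.comul) Coalgebra.comul
        Coalgebra.comul LinearMap.id, LinearMap.comp_id]
    -- RHS
    have t4 : ∀ x : (H ⊗[k] H) ⊗[k] (H ⊗[k] H),
        map (map Coalgebra.comul LinearMap.id) (map Coalgebra.comul LinearMap.id)
            (tensorTensorTensorComm k H H H H x)
          = tensorTensorTensorComm k (H ⊗[k] H) (H ⊗[k] H) H H
              (map (map Coalgebra.comul Coalgebra.comul) LinearMap.id x) := fun x => by
      have := LinearMap.congr_fun
        (aux_tttc_nat (R := k) (Coalgebra.comul (A := H)) Coalgebra.comul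
          (LinearMap.id : H →ₗ[k] H) (LinearMap.id : H →ₗ[k] H)) x
      simp only [LinearMap.comp_apply, LinearEquiv.coe_coe, TensorProduct.map_id] at this
      exact this.symm
    rw [t4]
    rw [aux_map_map_apply (map Coalgebra.comul Coalgebra.comul) LinearMap.id
        Coalgebra.comul Coalgebra.comul, LinearMap.id_comp]
    rw [aux_shuffle]
    rw [aux_map_map_apply (tensorTensorTensorComm k H H H H).toLinearMap LinearMap.id
        (map Coalgebra.comul Coalgebra.comul ∘ₗ Coalgebra.comul) Coalgebra.comul,
      LinearMap.id_comp, L4]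
  · refine LinearMap.ext fun w => ?_
    simp only [mbar, LinearMap.comp_apply, LinearEquiv.coe_coe]
    rw [aux_counit_mul]
    rw [aux_map_map_apply Coalgebra.counit Coalgebra.counit Φ m]
    rw [hΦ_counit, hm_counit]
    have u2 : ∀ X : H ⊗[k] (H ⊗[k] H),
        map Coalgebra.counit
          ((TensorProduct.lid k k).toLinearMap ∘ₗ map Coalgebra.counit Coalgebra.counit) X
        = map LinearMap.id
            ((TensorProduct.lid k k).toLinearMap ∘ₗ map Coalgebra.counit Coalgebra.counit)
            (map Coalgebra.counit LinearMap.id X) := fun X => by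
      rw [aux_map_map_apply, LinearMap.comp_id, LinearMap.id_comp]
    rw [u2]
    have u3 : ∀ y : (H ⊗[k] H) ⊗[k] H,
        map Coalgebra.counit (LinearMap.id : H ⊗[k] H →ₗ[k] H ⊗[k] H)
            (TensorProduct.assoc k H H H y)
          = TensorProduct.assoc k k H H
              (map (map Coalgebra.counit LinearMap.id) LinearMap.id y) := fun y => by
      have := LinearMap.congr_fun
        (aux_assoc_nat (R := k) (Coalgebra.counit (A := H)) (LinearMap.id : H →ₗ[k] H)
          (LinearMap.id : H →ₗ[k] H)) y
      simp only [LinearMap.comp_apply, LinearEquiv.coe_coe, TensorProduct.map_id] at this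
      exact this.symm
    rw [u3]
    rw [aux_map_map_apply (map Coalgebra.counit LinearMap.id) LinearMap.id
        Coalgebra.comul LinearMap.id, LinearMap.id_comp]
    rw [show map Coalgebra.counit (LinearMap.id : H →ₗ[k] H) ∘ₗ
        (Coalgebra.comul : H →ₗ[k] H ⊗[k] H) = TensorProduct.mk k k H 1 from
      Coalgebra.rTensor_counit_comp_comul]
    -- final pure computation
    induction w using TensorProduct.induction_on with
    | zero => simp
    | add u v hu hv => simp only [map_add, hu, hv]
    | tmul a b =>
      simp [LinearMap.mul'_apply, smul_eq_mul]
end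

section
/- Let (H, m, Φ) be a weak twisted post-Hopf algebra over a field k with H cocommutative and antipode λ, and set μ̄(a ⊗ b) := Φ(a₁)·m(a₂ ⊗ b). Then the Hopf truss compatibility holds: μ̄(a ⊗ bc) = μ̄(a₁ ⊗ b) · λ(Φ(a₂)) · μ̄(a₃ ⊗ c) for all a, b, c ∈ H. -/
open TensorProduct

/-- The map `a ⊗ b ⊗ c ↦ ρ(a₁ ⊗ b) · λ(σ(a₂)) · ρ(a₃ ⊗ c)`. -/
noncomputable def trussRHS (k : Type*) {H : Type*} [Field k] [Ring H] [HopfAlgebra k H]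
    (σ : H →ₗ[k] H) (ρ : H ⊗[k] H →ₗ[k] H) : H ⊗[k] (H ⊗[k] H) →ₗ[k] H :=
  (LinearMap.mul' k H) ∘ₗ
    TensorProduct.map ρ
      ((LinearMap.mul' k H) ∘ₗ
        TensorProduct.map ((HopfAlgebra.antipode (R := k)) ∘ₗ σ) ρ ∘ₗ
        (TensorProduct.assoc k H H H).toLinearMap) ∘ₗ
    (TensorProduct.tensorTensorTensorComm k H (H ⊗[k] H) H H).toLinearMap ∘ₗ
    TensorProduct.map ((TensorProduct.map LinearMap.id Coalgebra.comul) ∘ₗ Coalgebra.comul)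
      LinearMap.id

/-!
Both sides equal `∑ μ̄(a₁ ⊗ b) · m(a₂ ⊗ c)`. On the left this is axiom (v) together with
coassociativity. On the right, `Φ` being a coalgebra map gives `λ(Φ(a₁)) · Φ(a₂) = ε(a) · 1`, hence
`λ(Φ(a₁)) · μ̄(a₂ ⊗ c) = m(a ⊗ c)`.
-/

open Coalgebra HopfAlgebra

section Sweedler

variable {R C H : Type*} [CommSemiring R] [AddCommMonoid C] [Module R C] [Coalgebra R C]
  [Semiring H] [HopfAlgebra R H] {ι κ : Type*} {x : C}

theorem sum_antipode_coalgHom_mul_coalgHom (φ : C →ₗc[R] H) (r : Repr R x ι) :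
    ∑ i ∈ r.index, antipode R (φ (r.left i)) * φ (r.right i) = algebraMap R H (counit x) := by
  rw [← CoalgHomClass.counit_comp_apply φ x]
  exact sum_antipode_mul_eq_algebraMap_counit (r.induced φ)

theorem sum_sum_antipode_coalgHom_mul_mul (φ : C →ₗc[R] H) (f : C →ₗ[R] H) (r : Repr R x ι)
    (s : ∀ i, Repr R (r.right i) κ) :
    ∑ i ∈ r.index, ∑ j ∈ (s i).index,
      antipode R (φ (r.left i)) * (φ ((s i).left j) * f ((s i).right j)) = f x := by
  let t i : Repr R (r.left i) (C × C) := ℛ R (r.left i)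
  have hcoassoc := congr((LinearMap.mul' R H ∘ₗ TensorProduct.map (antipode R ∘ₗ (φ : C →ₗ[R] H))
      (LinearMap.mul' R H ∘ₗ TensorProduct.map (φ : C →ₗ[R] H) f)) $(sum_tmul_tmul_eq r t s))
  simp only [map_sum, LinearMap.comp_apply, TensorProduct.map_tmul, LinearMap.mul'_apply,
    CoalgHom.coe_toLinearMap] at hcoassoc
  rw [← hcoassoc]
  calc ∑ i ∈ r.index, ∑ j ∈ (t i).index,
        antipode R (φ ((t i).left j)) * (φ ((t i).right j) * f (r.right i))
      = ∑ i ∈ r.index, algebraMap R H (counit (r.left i)) * f (r.right i) := by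
        refine Finset.sum_congr rfl fun i _ => ?_
        simp_rw [← mul_assoc, ← Finset.sum_mul, sum_antipode_coalgHom_mul_coalgHom]
    _ = f x := by
        simp_rw [← Algebra.smul_def, ← map_smul, ← map_sum, sum_counit_smul]

end Sweedler

section WeakTwistedPostHopf

variable {k H : Type*} [Field k] [Ring H] [HopfAlgebra k H] {ι κ : Type*}

theorem mbar_tmul (Φ : H →ₗ[k] H) (m : H ⊗[k] H →ₗ[k] H) {a : H} (r : Repr k a ι) (b : H) :
    mbar k Φ m (a ⊗ₜ b) = ∑ i ∈ r.index, Φ (r.left i) * m (r.right i ⊗ₜ b) := by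
  simp [mbar, ← r.eq, TensorProduct.sum_tmul]

theorem sum_antipode_mul_mbar (φ : H →ₗc[k] H) (m : H ⊗[k] H →ₗ[k] H) {a : H}
    (r : Repr k a ι) (c : H) :
    ∑ i ∈ r.index, antipode k (φ (r.left i)) * mbar k φ m (r.right i ⊗ₜ c) = m (a ⊗ₜ c) := by
  simp_rw [mbar_tmul _ _ (ℛ k _), Finset.mul_sum, CoalgHom.coe_toLinearMap]
  exact sum_sum_antipode_coalgHom_mul_mul φ (m ∘ₗ (TensorProduct.mk k H H).flip c) r _

theorem trussRHS_tmul (σ : H →ₗ[k] H) (ρ : H ⊗[k] H →ₗ[k] H) {a : H} (r : Repr k a ι)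
    (s : ∀ i, Repr k (r.right i) κ) (b c : H) :
    trussRHS k σ ρ (a ⊗ₜ (b ⊗ₜ c)) = ∑ i ∈ r.index, ρ (r.left i ⊗ₜ b) *
      ∑ j ∈ (s i).index, antipode k (σ ((s i).left j)) * ρ ((s i).right j ⊗ₜ c) := by
  simp [trussRHS, ← r.eq, ← (s _).eq, TensorProduct.sum_tmul, TensorProduct.tmul_sum,
    Finset.mul_sum]

section Distrib

variable {m : H ⊗[k] H →ₗ[k] H}
  (h5 : m ∘ₗ TensorProduct.map LinearMap.id (LinearMap.mul' k H)
    = (LinearMap.mul' k H) ∘ₗ TensorProduct.map m m ∘ₗ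
        (TensorProduct.tensorTensorTensorComm k H H H H).toLinearMap ∘ₗ
        TensorProduct.map Coalgebra.comul LinearMap.id)
include h5

theorem apply_tmul_mul_of_distrib {a : H} (r : Repr k a ι) (b c : H) :
    m (a ⊗ₜ (b * c)) = ∑ i ∈ r.index, m (r.left i ⊗ₜ b) * m (r.right i ⊗ₜ c) := by
  simpa [← r.eq, TensorProduct.sum_tmul] using congr($h5 (a ⊗ₜ (b ⊗ₜ c)))

theorem mbar_tmul_mul_of_distrib (Φ : H →ₗ[k] H) {a : H} (r : Repr k a ι) (b c : H) :
    mbar k Φ m (a ⊗ₜ (b * c))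
      = ∑ i ∈ r.index, mbar k Φ m (r.left i ⊗ₜ b) * m (r.right i ⊗ₜ c) := by
  let s i : Repr k (r.right i) (H × H) := ℛ k (r.right i)
  let t i : Repr k (r.left i) (H × H) := ℛ k (r.left i)
  have hcoassoc := congr((LinearMap.mul' k H ∘ₗ TensorProduct.map Φ
      (LinearMap.mul' k H ∘ₗ TensorProduct.map (m ∘ₗ (TensorProduct.mk k H H).flip b)
        (m ∘ₗ (TensorProduct.mk k H H).flip c))) $(sum_tmul_tmul_eq r t s))
  simp only [map_sum, LinearMap.comp_apply, TensorProduct.map_tmul, LinearMap.mul'_apply,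
    TensorProduct.mk_apply, LinearMap.flip_apply] at hcoassoc
  simp_rw [mbar_tmul Φ m r, apply_tmul_mul_of_distrib h5 (s _), Finset.mul_sum, ← hcoassoc,
    mbar_tmul Φ m (t _), Finset.sum_mul, mul_assoc]

end Distrib

end WeakTwistedPostHopf

theorem stmt6_general (k H : Type*) [Field k] [Ring H] [HopfAlgebra k H]
    (m : H ⊗[k] H →ₗ[k] H) (Φ : H →ₗ[k] H)
    (hΦ_comul : Coalgebra.comul ∘ₗ Φ = TensorProduct.map Φ Φ ∘ₗ Coalgebra.comul)
    (hΦ_counit : Coalgebra.counit ∘ₗ Φ = Coalgebra.counit)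
    (h5 : m ∘ₗ TensorProduct.map LinearMap.id (LinearMap.mul' k H)
      = (LinearMap.mul' k H) ∘ₗ TensorProduct.map m m ∘ₗ
          (TensorProduct.tensorTensorTensorComm k H H H H).toLinearMap ∘ₗ
          TensorProduct.map Coalgebra.comul LinearMap.id)
    :
    mbar k Φ m ∘ₗ TensorProduct.map LinearMap.id (LinearMap.mul' k H)
      = trussRHS k Φ (mbar k Φ m) := by
  let φ : H →ₗc[k] H := { Φ with counit_comp := hΦ_counit, map_comp_comul := hΦ_comul.symm }
  ext a b c
  simp only [TensorProduct.AlgebraTensorModule.curry_apply, TensorProduct.curry_apply,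
    LinearMap.coe_restrictScalars, LinearMap.comp_apply, TensorProduct.map_tmul,
    LinearMap.id_coe, id_eq, LinearMap.mul'_apply]
  rw [mbar_tmul_mul_of_distrib h5 Φ (ℛ k a), trussRHS_tmul Φ _ (ℛ k a) (fun i => ℛ k _)]
  exact Finset.sum_congr rfl fun i _ => congrArg _ (sum_antipode_mul_mbar φ m _ c).symm

theorem stmt6 (k H : Type*) [Field k] [Ring H] [HopfAlgebra k H]
    (m : H ⊗[k] H →ₗ[k] H) (Φ : H →ₗ[k] H)
    (hm_comul : Coalgebra.comul ∘ₗ m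
      = (TensorProduct.map m m) ∘ₗ (TensorProduct.tensorTensorTensorComm k H H H H).toLinearMap
          ∘ₗ (TensorProduct.map Coalgebra.comul Coalgebra.comul))
    (hm_counit : Coalgebra.counit ∘ₗ m
      = (TensorProduct.lid k k).toLinearMap ∘ₗ
          TensorProduct.map Coalgebra.counit Coalgebra.counit)
    (hΦ_comul : Coalgebra.comul ∘ₗ Φ = TensorProduct.map Φ Φ ∘ₗ Coalgebra.comul)
    (hΦ_counit : Coalgebra.counit ∘ₗ Φ = Coalgebra.counit)
    (h3 : Φ ∘ₗ mbar k Φ m = mbar k Φ m ∘ₗ TensorProduct.map LinearMap.id Φ)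
    (h4 : m ∘ₗ TensorProduct.map LinearMap.id m
      = m ∘ₗ TensorProduct.map (mbar k Φ m) LinearMap.id ∘ₗ
          (TensorProduct.assoc k H H H).symm.toLinearMap)
    (h5 : m ∘ₗ TensorProduct.map LinearMap.id (LinearMap.mul' k H)
      = (LinearMap.mul' k H) ∘ₗ TensorProduct.map m m ∘ₗ
          (TensorProduct.tensorTensorTensorComm k H H H H).toLinearMap ∘ₗ
          TensorProduct.map Coalgebra.comul LinearMap.id)
    (hcoc : ∀ a : H, (TensorProduct.comm k H H) (Coalgebra.comul (R := k) a)
      = Coalgebra.comul a)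
    :
    mbar k Φ m ∘ₗ TensorProduct.map LinearMap.id (LinearMap.mul' k H)
      = trussRHS k Φ (mbar k Φ m) :=
  stmt6_general k H m Φ hΦ_comul hΦ_counit h5
end

section
/- Let (H₁, H₂, σ) be a Hopf truss over a field k. Then σ(a) = a ∘ 1 and σ(a ∘ b) = a ∘ σ(b) for all a, b ∈ H. -/
/-! Put `f a := a ∘ 1`. Both `f` and `σ` are coalgebra endomorphisms, so in the convolution
monoid `End H` they have the two-sided inverses `λ ∘ f` and `λ ∘ σ`. The compatibility at
`b = c = 1` reads `f = f * (λ ∘ σ) * f`; cancelling `f` on the left shows that `λ ∘ σ` is also a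
left inverse of `f`, hence `σ = f`. The identity `σ (a ∘ b) = a ∘ σ b` is then associativity of
`∘` at `a ⊗ b ⊗ 1`. -/

open TensorProduct

open WithConv HopfAlgebra

theorem eq_of_mul_eq_one_of_eq_mul_mul {M : Type*} [Monoid M] {u v x y : M}
    (hyx : y * x = 1) (hvu : v * u = 1) (hu : u = u * x * u) : y = u :=
  left_inv_eq_right_inv hyx <| calc
    x * u = v * u * (x * u) := by rw [hvu, one_mul]
    _ = v * (u * x * u) := by simp only [mul_assoc]
    _ = 1 := by rw [← hu, hvu]

section
variable {R C H : Type*} [CommSemiring R] [AddCommMonoid C] [Module R C] [Coalgebra R C]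
  [Semiring H] [HopfAlgebra R H]

theorem antipode_comp_convMul_self (φ : C →ₗc[R] H) :
    toConv (antipode R ∘ₗ φ.toLinearMap) * toConv φ.toLinearMap = 1 := by
  have h := LinearMap.convMul_comp_coalgHom_distrib (toConv (antipode R)) (toConv LinearMap.id) φ
  rw [LinearMap.antipode_mul_id] at h
  simp only [LinearMap.id_comp] at h
  apply ofConv_injective
  rw [← h]
  ext c
  simp

theorem convMul_antipode_comp_self (φ : C →ₗc[R] H) :
    toConv φ.toLinearMap * toConv (antipode R ∘ₗ φ.toLinearMap) = 1 := by
  have h := LinearMap.convMul_comp_coalgHom_distrib (toConv LinearMap.id) (toConv (antipode R)) φ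
  rw [LinearMap.id_mul_antipode] at h
  simp only [LinearMap.id_comp] at h
  apply ofConv_injective
  rw [← h]
  ext c
  simp

end

/-- A coalgebra map because `1` is group-like. -/
def curryFlipOneCoalgHom {R H : Type*} [CommSemiring R] [Semiring H] [Bialgebra R H]
    {ρ : H ⊗[R] H →ₗ[R] H}
    (hρ_comul : Coalgebra.comul ∘ₗ ρ
      = (TensorProduct.map ρ ρ) ∘ₗ (TensorProduct.tensorTensorTensorComm R H H H H).toLinearMap
          ∘ₗ (TensorProduct.map Coalgebra.comul Coalgebra.comul))
    (hρ_counit : Coalgebra.counit ∘ₗ ρ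
      = (TensorProduct.lid R R).toLinearMap ∘ₗ
          TensorProduct.map Coalgebra.counit Coalgebra.counit) : H →ₗc[R] H where
  toLinearMap := (curry ρ).flip 1
  counit_comp := by
    ext a
    simpa using congr($hρ_counit (a ⊗ₜ 1))
  map_comp_comul := by
    ext a
    have h := congr($hρ_comul (a ⊗ₜ 1))
    simp only [LinearMap.comp_apply, TensorProduct.map_tmul, Bialgebra.comul_one] at h
    rw [LinearMap.comp_apply, LinearMap.comp_apply, LinearMap.flip_apply, curry_apply, h]
    induction Coalgebra.comul (R := R) a using TensorProduct.induction_on with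
    | zero => simp
    | tmul x y => simp [Algebra.TensorProduct.one_def]
    | add x y hx hy => simp only [map_add, TensorProduct.add_tmul, hx, hy]

theorem curry_flip_mul_eq_convMul {k H : Type*} [Field k] [Ring H] [HopfAlgebra k H]
    {ρ : H ⊗[k] H →ₗ[k] H} {σ : H →ₗ[k] H}
    (hcompat : ρ ∘ₗ TensorProduct.map LinearMap.id (LinearMap.mul' k H) = trussRHS k σ ρ)
    (b c : H) :
    toConv ((curry ρ).flip (b * c)) =
      toConv ((curry ρ).flip b) * toConv (antipode k ∘ₗ σ) * toConv ((curry ρ).flip c) := by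
  -- Both sides factor through `(id ⊗ Δ) ∘ Δ : a ↦ a₁ ⊗ a₂ ⊗ a₃`.
  set Φ : H ⊗[k] (H ⊗[k] H) →ₗ[k] H := LinearMap.mul' k H ∘ₗ
    TensorProduct.map ((curry ρ).flip b) (LinearMap.mul' k H ∘ₗ
      TensorProduct.map (antipode k ∘ₗ σ) ((curry ρ).flip c))
  have hcompat_bc : (curry ρ).flip (b * c) =
      trussRHS k σ ρ ∘ₗ (TensorProduct.mk k H (H ⊗[k] H)).flip (b ⊗ₜ c) := by
    rw [← hcompat]; ext a; simp
  have htruss : trussRHS k σ ρ ∘ₗ (TensorProduct.mk k H (H ⊗[k] H)).flip (b ⊗ₜ c) =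
      Φ ∘ₗ (Coalgebra.comul (R := k)).lTensor H ∘ₗ Coalgebra.comul := by
    have hΦ : (LinearMap.mul' k H ∘ₗ TensorProduct.map ρ (LinearMap.mul' k H ∘ₗ
        TensorProduct.map (antipode k ∘ₗ σ) ρ ∘ₗ (TensorProduct.assoc k H H H).toLinearMap) ∘ₗ
        (TensorProduct.tensorTensorTensorComm k H (H ⊗[k] H) H H).toLinearMap) ∘ₗ
        (TensorProduct.mk k (H ⊗[k] (H ⊗[k] H)) (H ⊗[k] H)).flip (b ⊗ₜ c) = Φ := by
      ext x y z; simp [Φ]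
    rw [← hΦ]
    ext a
    simp [trussRHS, ← LinearMap.lTensor_def]
  have hconv : (toConv ((curry ρ).flip b) * (toConv (antipode k ∘ₗ σ) *
      toConv ((curry ρ).flip c))).ofConv =
      Φ ∘ₗ (Coalgebra.comul (R := k)).lTensor H ∘ₗ Coalgebra.comul := by
    simp only [Φ, LinearMap.convMul_def, ofConv_toConv, ← LinearMap.map_comp_lTensor,
      LinearMap.lTensor_comp, LinearMap.comp_assoc]
  rw [mul_assoc]
  exact ofConv_injective (by rw [hconv, ofConv_toConv, hcompat_bc, htruss])

theorem stmt8 (k H : Type*) [Field k] [Ring H] [HopfAlgebra k H]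
    (ρ : H ⊗[k] H →ₗ[k] H) (σ : H →ₗ[k] H)
    (hρ_assoc : ρ ∘ₗ TensorProduct.map LinearMap.id ρ
      = ρ ∘ₗ TensorProduct.map ρ LinearMap.id ∘ₗ
          (TensorProduct.assoc k H H H).symm.toLinearMap)
    (hρ_comul : Coalgebra.comul ∘ₗ ρ
      = (TensorProduct.map ρ ρ) ∘ₗ (TensorProduct.tensorTensorTensorComm k H H H H).toLinearMap
          ∘ₗ (TensorProduct.map Coalgebra.comul Coalgebra.comul))
    (hρ_counit : Coalgebra.counit ∘ₗ ρ
      = (TensorProduct.lid k k).toLinearMap ∘ₗ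
          TensorProduct.map Coalgebra.counit Coalgebra.counit)
    (hσ_comul : Coalgebra.comul ∘ₗ σ = TensorProduct.map σ σ ∘ₗ Coalgebra.comul)
    (hσ_counit : Coalgebra.counit ∘ₗ σ = Coalgebra.counit)
    (hcompat : ρ ∘ₗ TensorProduct.map LinearMap.id (LinearMap.mul' k H) = trussRHS k σ ρ)
    :
    (∀ a : H, σ a = ρ (a ⊗ₜ[k] (1 : H))) ∧
    (∀ a b : H, σ (ρ (a ⊗ₜ[k] b)) = ρ (a ⊗ₜ[k] σ b)) := by
  set f := (curry ρ).flip (1 : H)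
  have hf_inv : toConv (antipode k ∘ₗ f) * toConv f = 1 :=
    antipode_comp_convMul_self (curryFlipOneCoalgHom hρ_comul hρ_counit)
  have hσ_inv : toConv σ * toConv (antipode k ∘ₗ σ) = 1 :=
    convMul_antipode_comp_self ⟨σ, hσ_counit, hσ_comul.symm⟩
  have hf : toConv f = toConv f * toConv (antipode k ∘ₗ σ) * toConv f := by
    simpa using curry_flip_mul_eq_convMul hcompat 1 1
  have hσ_eq_f : σ = f := congrArg ofConv (eq_of_mul_eq_one_of_eq_mul_mul hσ_inv hf_inv hf)
  have hσ_apply (a : H) : σ a = ρ (a ⊗ₜ 1) := congr($hσ_eq_f a)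
  refine ⟨hσ_apply, fun a b => ?_⟩
  rw [hσ_apply, hσ_apply]
  simpa using congr($hρ_assoc (a ⊗ₜ (b ⊗ₜ 1))).symm
end

section
/- Let (H₁, H₂, σ) be a cocommutative Hopf truss over a field k, and define Γ(a ⊗ b) := λ(σ(a₁)) · (a₂ ∘ b). Then Γ is a coalgebra morphism: δ(Γ(a ⊗ b)) = Γ(a₁ ⊗ b₁) ⊗ Γ(a₂ ⊗ b₂) and ε(Γ(a ⊗ b)) = ε(a)ε(b). -/
open TensorProduct

/-!
The antipode of a cocommutative Hopf algebra is a coalgebra morphism: both `δ ∘ S` and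
`(S ⊗ S) ∘ δ` are convolution inverses of `δ`. Hence `Φ = S ∘ σ` is a coalgebra morphism, and
`Γ = μ ∘ (Φ ⊗ ρ) ∘ α ∘ (δ ⊗ id)` is a composite of coalgebra morphisms: `δ` is one because `H`
is cocommutative, and `μ` is one because `H` is a bialgebra.
-/

open Coalgebra Bialgebra HopfAlgebra WithConv

namespace TensorProduct

variable {R A B : Type*} [CommSemiring R] [AddCommMonoid A] [Module R A] [Coalgebra R A]
  [AddCommMonoid B] [Module R B] [Coalgebra R B]

lemma comul_eq_tensorTensorTensorComm_comp_map :
    comul (R := R) (A := A ⊗[R] B) =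
      (tensorTensorTensorComm R A A B B).toLinearMap ∘ₗ map comul comul :=
  rfl

lemma counit_eq_lid_comp_map :
    counit (R := R) (A := A ⊗[R] B) = (TensorProduct.lid R R).toLinearMap ∘ₗ map counit counit := by
  rw [counit_def, AlgebraTensorModule.rid_eq_rid, lid_eq_rid]
  rfl

lemma map_convOne_convOne {C D : Type*} [Semiring C] [Algebra R C] [Semiring D] [Algebra R D] :
    toConv (map (1 : WithConv (A →ₗ[R] C)).ofConv (1 : WithConv (B →ₗ[R] D)).ofConv) = 1 := by
  ext a b
  simp [Algebra.TensorProduct.one_def, Algebra.algebraMap_eq_smul_one, smul_tmul', smul_smul,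
    mul_comm]

end TensorProduct

namespace HopfAlgebra

variable {R A : Type*} [CommSemiring R] [Semiring A] [HopfAlgebra R A]
  [IsCocomm R A]

lemma map_antipode_comp_comul_convMul_comul :
    toConv (map (antipode R) (antipode R) ∘ₗ comul (R := R) (A := A)) * toConv comul = 1 := by
  -- `δ` is a coalgebra morphism, so precomposing with it distributes over convolution.
  have h := LinearMap.convMul_comp_coalgHom_distrib
    (toConv (map (antipode R (A := A)) (antipode R))) (toConv (map .id .id)) (comulCoalgHom R A)
  rw [map_convMul_map, LinearMap.antipode_mul_id, map_convOne_convOne,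
    LinearMap.convOne_comp_coalgHom, map_id, ofConv_toConv, LinearMap.id_comp] at h
  exact ofConv_injective h.symm

theorem comul_comp_antipode :
    comul ∘ₗ antipode R = map (antipode R) (antipode R) ∘ₗ comul (R := R) (A := A) :=
  congrArg ofConv (left_inv_eq_right_inv map_antipode_comp_comul_convMul_comul
    LinearMap.comul_right_inv).symm

variable (R A) in
noncomputable def antipodeCoalgHom : A →ₗc[R] A where
  toLinearMap := antipode R
  counit_comp := counit_comp_antipode
  map_comp_comul := comul_comp_antipode.symm

end HopfAlgebra

namespace CoalgHom

variable {R C D B : Type*} [CommSemiring R] [AddCommMonoid C] [Module R C] [Coalgebra R C]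
  [IsCocomm R C] [AddCommMonoid D] [Module R D] [Coalgebra R D] [Semiring B] [Bialgebra R B]

/-- The coalgebra morphism `c ⊗ d ↦ φ c₁ * ψ (c₂ ⊗ d)`. -/
noncomputable def twistedMul (φ : C →ₗc[R] B) (ψ : C ⊗[R] D →ₗc[R] B) : C ⊗[R] D →ₗc[R] B :=
  (mulCoalgHom R B).comp <| (Coalgebra.TensorProduct.map φ ψ).comp <|
    (Coalgebra.TensorProduct.assoc R R C C D).toCoalgHom.comp <|
      Coalgebra.TensorProduct.map (comulCoalgHom R C) (CoalgHom.id R D)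

end CoalgHom

lemma toLinearMap_twistedMul {k H : Type*} [Field k] [Ring H] [HopfAlgebra k H] [IsCocomm k H]
    (φ : H →ₗc[k] H) (ψ : H ⊗[k] H →ₗc[k] H) :
    (φ.twistedMul ψ).toLinearMap = mbar k φ ψ :=
  rfl

theorem stmt9_general (k H : Type*) [Field k] [Ring H] [HopfAlgebra k H]
    (ρ : H ⊗[k] H →ₗ[k] H) (σ : H →ₗ[k] H)
    (hρ_comul : Coalgebra.comul ∘ₗ ρ
      = (TensorProduct.map ρ ρ) ∘ₗ (TensorProduct.tensorTensorTensorComm k H H H H).toLinearMap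
          ∘ₗ (TensorProduct.map Coalgebra.comul Coalgebra.comul))
    (hρ_counit : Coalgebra.counit ∘ₗ ρ
      = (TensorProduct.lid k k).toLinearMap ∘ₗ
          TensorProduct.map Coalgebra.counit Coalgebra.counit)
    (hσ_comul : Coalgebra.comul ∘ₗ σ = TensorProduct.map σ σ ∘ₗ Coalgebra.comul)
    (hσ_counit : Coalgebra.counit ∘ₗ σ = Coalgebra.counit)
    (hcoc : ∀ a : H, (TensorProduct.comm k H H) (Coalgebra.comul (R := k) a)
      = Coalgebra.comul a)
    :
    (Coalgebra.comul ∘ₗ mbar k ((HopfAlgebra.antipode (R := k)) ∘ₗ σ) ρ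
      = (TensorProduct.map (mbar k ((HopfAlgebra.antipode (R := k)) ∘ₗ σ) ρ)
            (mbar k ((HopfAlgebra.antipode (R := k)) ∘ₗ σ) ρ)) ∘ₗ
          (TensorProduct.tensorTensorTensorComm k H H H H).toLinearMap ∘ₗ
          (TensorProduct.map Coalgebra.comul Coalgebra.comul)) ∧
    (Coalgebra.counit ∘ₗ mbar k ((HopfAlgebra.antipode (R := k)) ∘ₗ σ) ρ
      = (TensorProduct.lid k k).toLinearMap ∘ₗ
          TensorProduct.map Coalgebra.counit Coalgebra.counit) := by
  have : IsCocomm k H := ⟨LinearMap.ext hcoc⟩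
  let σc : H →ₗc[k] H := ⟨σ, hσ_counit, hσ_comul.symm⟩
  let ρc : H ⊗[k] H →ₗc[k] H :=
    ⟨ρ, by rw [counit_eq_lid_comp_map, hρ_counit],
      by rw [comul_eq_tensorTensorTensorComm_comp_map, hρ_comul]⟩
  let Γ := ((antipodeCoalgHom k H).comp σc).twistedMul ρc
  have hΓ : Γ.toLinearMap = mbar k (antipode k ∘ₗ σ) ρ := toLinearMap_twistedMul _ _
  rw [← hΓ, ← comul_eq_tensorTensorTensorComm_comp_map,
    ← counit_eq_lid_comp_map]
  exact ⟨Γ.map_comp_comul.symm, Γ.counit_comp⟩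

theorem stmt9 (k H : Type*) [Field k] [Ring H] [HopfAlgebra k H]
    (ρ : H ⊗[k] H →ₗ[k] H) (σ : H →ₗ[k] H)
    (hρ_assoc : ρ ∘ₗ TensorProduct.map LinearMap.id ρ
      = ρ ∘ₗ TensorProduct.map ρ LinearMap.id ∘ₗ
          (TensorProduct.assoc k H H H).symm.toLinearMap)
    (hρ_comul : Coalgebra.comul ∘ₗ ρ
      = (TensorProduct.map ρ ρ) ∘ₗ (TensorProduct.tensorTensorTensorComm k H H H H).toLinearMap
          ∘ₗ (TensorProduct.map Coalgebra.comul Coalgebra.comul))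
    (hρ_counit : Coalgebra.counit ∘ₗ ρ
      = (TensorProduct.lid k k).toLinearMap ∘ₗ
          TensorProduct.map Coalgebra.counit Coalgebra.counit)
    (hσ_comul : Coalgebra.comul ∘ₗ σ = TensorProduct.map σ σ ∘ₗ Coalgebra.comul)
    (hσ_counit : Coalgebra.counit ∘ₗ σ = Coalgebra.counit)
    (hcompat : ρ ∘ₗ TensorProduct.map LinearMap.id (LinearMap.mul' k H) = trussRHS k σ ρ)
    (hcoc : ∀ a : H, (TensorProduct.comm k H H) (Coalgebra.comul (R := k) a)
      = Coalgebra.comul a)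
    :
    (Coalgebra.comul ∘ₗ mbar k ((HopfAlgebra.antipode (R := k)) ∘ₗ σ) ρ
      = (TensorProduct.map (mbar k ((HopfAlgebra.antipode (R := k)) ∘ₗ σ) ρ)
            (mbar k ((HopfAlgebra.antipode (R := k)) ∘ₗ σ) ρ)) ∘ₗ
          (TensorProduct.tensorTensorTensorComm k H H H H).toLinearMap ∘ₗ
          (TensorProduct.map Coalgebra.comul Coalgebra.comul)) ∧
    (Coalgebra.counit ∘ₗ mbar k ((HopfAlgebra.antipode (R := k)) ∘ₗ σ) ρ
      = (TensorProduct.lid k k).toLinearMap ∘ₗ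
          TensorProduct.map Coalgebra.counit Coalgebra.counit) :=
  stmt9_general k H ρ σ hρ_comul hρ_counit hσ_comul hσ_counit hcoc
end

section
/- Let (H, m, Φ) be a cocommutative weak twisted post-Hopf algebra over a field k with μ̄(a ⊗ b) := Φ(a₁)·m(a₂ ⊗ b) satisfying μ̄(1 ⊗ a) = a, and let S : H → H be a coalgebra morphism such that μ̄(a₁ ⊗ S(a₂)) = ε(a)·1 for all a ∈ H. Then S(S(a)) = Φ(a) for all a ∈ H. -/
/-!
Write `f ⋆ g` for the convolution of linear maps `H → H`, so that `μ̄(a ⊗ b) = (Φ ⋆ m(- ⊗ b))(a)`.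
Condition (v) says `m(- ⊗ uv) = m(- ⊗ u) ⋆ m(- ⊗ v)`; hence `m(- ⊗ 1)` is a convolution
idempotent coalgebra map, and composing with the antipode shows it is invertible, so
`m(a ⊗ 1) = ε(a) 1` and `μ̄(a ⊗ 1) = Φ(a)`. By cocommutativity `μ̄` is a coalgebra map, and
then (iii)–(v) make `μ̄` associative.

Now replace the multiplication of `H` by `μ̄` in the convolution: `f ⋆̄ g := μ̄ ∘ (f ⊗ g) ∘ Δ` is
associative, `ε 1` is a left unit, and `f ⋆̄ ε 1 = Φ ∘ f`. The hypothesis is `id ⋆̄ S = ε 1`;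
precomposing with the coalgebra map `S` gives `S ⋆̄ S² = ε 1`, so
`S² = (id ⋆̄ S) ⋆̄ S² = id ⋆̄ (S ⋆̄ S²) = id ⋆̄ ε 1 = Φ`.
-/

open TensorProduct

open Coalgebra WithConv
open scoped RingTheory.LinearMap

theorem HopfAlgebra.toConv_coalgHom_eq_one_of_mul_self {R C A : Type*} [CommSemiring R]
    [AddCommMonoid C] [Module R C] [Coalgebra R C] [Semiring A] [HopfAlgebra R A]
    (N : C →ₗc[R] A) (hN : toConv N.toLinearMap * toConv N.toLinearMap = toConv N.toLinearMap) :
    toConv N.toLinearMap = 1 := by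
  have hinv : toConv (antipode R ∘ₗ N.toLinearMap) * toConv N.toLinearMap = 1 := by
    have := LinearMap.convMul_comp_coalgHom_distrib (toConv (antipode R)) (toConv .id) N
    rw [LinearMap.antipode_mul_id] at this
    refine WithConv.ext (this.symm.trans ?_)
    ext c
    simp
  calc toConv N.toLinearMap
      = toConv (antipode R ∘ₗ N.toLinearMap) * toConv N.toLinearMap * toConv N.toLinearMap := by
        rw [hinv, one_mul]
    _ = 1 := by rw [mul_assoc, hN, hinv]

namespace LinearMap

variable {R C A : Type*} [CommSemiring R] [AddCommMonoid C] [Module R C] [Coalgebra R C]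
  [AddCommMonoid A] [Module R A] (op : A ⊗[R] A →ₗ[R] A)

noncomputable def convWith (f g : C →ₗ[R] A) : C →ₗ[R] A := op ∘ₗ map f g ∘ₗ comul

theorem convWith_assoc (hop : ∀ a b c, op (op (a ⊗ₜ b) ⊗ₜ c) = op (a ⊗ₜ op (b ⊗ₜ c)))
    (f g h : C →ₗ[R] A) : convWith op (convWith op f g) h = convWith op f (convWith op g h) :=
  calc convWith op (convWith op f g) h
    _ = (op ∘ₗ rTensor _ op) ∘ₗ ((map f g ⊗ₘ h) ∘ₗ
        (TensorProduct.assoc R C C C).symm) ∘ₗ lTensor C comul ∘ₗ comul := by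
      ext; simp [comp_assoc, convWith]
    _ = (op ∘ₗ rTensor A op ∘ₗ (TensorProduct.assoc R A A A).symm.toLinearMap) ∘ₗ
        (f ⊗ₘ (g ⊗ₘ h)) ∘ₗ lTensor C comul ∘ₗ comul := by
      simp only [map_map_comp_assoc_symm_eq, comp_assoc]
    _ = (op ∘ₗ lTensor _ op) ∘ₗ (f ⊗ₘ (g ⊗ₘ h)) ∘ₗ (lTensor C comul ∘ₗ comul) := by
      congr 1
      ext
      simp [hop]
    _ = convWith op f (convWith op g h) := by ext; simp [convWith]

theorem convWith_comp_coalgHom {B : Type*} [AddCommMonoid B] [Module R B] [Coalgebra R B]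
    (f g : C →ₗ[R] A) (φ : B →ₗc[R] C) :
    convWith op f g ∘ₗ φ.toLinearMap = convWith op (f ∘ₗ φ.toLinearMap) (g ∘ₗ φ.toLinearMap) := by
  simp only [convWith, comp_assoc, ← φ.map_comp_comul, map_comp]

theorem convWith_counit_left (u : A) (hu : ∀ a, op (u ⊗ₜ a) = a) (g : C →ₗ[R] A) :
    convWith op (toSpanSingleton R A u ∘ₗ counit) g = g := by
  have : map (toSpanSingleton R A u ∘ₗ counit) g ∘ₗ comul
      = map (toSpanSingleton R A u) g ∘ₗ TensorProduct.mk R R C 1 := by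
    rw [← rTensor_counit_comp_comul, ← comp_assoc, rTensor, ← map_comp, comp_id]
  ext c
  simp [convWith, ← comp_assoc, this, hu]

theorem convWith_counit_right (u : A) (φ : A →ₗ[R] A) (hu : ∀ a, op (a ⊗ₜ u) = φ a)
    (f : C →ₗ[R] A) : convWith op f (toSpanSingleton R A u ∘ₗ counit) = φ ∘ₗ f := by
  have : map f (toSpanSingleton R A u ∘ₗ counit) ∘ₗ comul
      = map f (toSpanSingleton R A u) ∘ₗ (TensorProduct.mk R C R).flip 1 := by
    rw [← lTensor_counit_comp_comul, ← comp_assoc, lTensor, ← map_comp, comp_id]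
  ext c
  simp [convWith, ← comp_assoc, this, hu]

end LinearMap

theorem CoalgHom.comp_self_eq_of_convWith_id_eq {R C : Type*} [CommSemiring R]
    [AddCommMonoid C] [Module R C] [Coalgebra R C] (op : C ⊗[R] C →ₗ[R] C)
    (hop : ∀ a b c, op (op (a ⊗ₜ b) ⊗ₜ c) = op (a ⊗ₜ op (b ⊗ₜ c)))
    (u : C) (φ : C →ₗ[R] C) (hu_left : ∀ a, op (u ⊗ₜ a) = a)
    (hu_right : ∀ a, op (a ⊗ₜ u) = φ a) (S : C →ₗc[R] C)
    (hS : LinearMap.convWith op .id S.toLinearMap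
      = LinearMap.toSpanSingleton R C u ∘ₗ counit (R := R)) :
    S.toLinearMap ∘ₗ S.toLinearMap = φ := by
  set e := LinearMap.toSpanSingleton R C u ∘ₗ counit (R := R) (A := C)
  have hSS : LinearMap.convWith op S.toLinearMap (S.toLinearMap ∘ₗ S.toLinearMap) = e :=
    calc LinearMap.convWith op S.toLinearMap (S.toLinearMap ∘ₗ S.toLinearMap)
        = LinearMap.convWith op .id S.toLinearMap ∘ₗ S.toLinearMap := by
          rw [LinearMap.convWith_comp_coalgHom, LinearMap.id_comp]
      _ = e := by rw [hS, LinearMap.comp_assoc, S.counit_comp]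
  calc S.toLinearMap ∘ₗ S.toLinearMap
      = LinearMap.convWith op e (S.toLinearMap ∘ₗ S.toLinearMap) :=
        (LinearMap.convWith_counit_left op u hu_left _).symm
    _ = LinearMap.convWith op .id
          (LinearMap.convWith op S.toLinearMap (S.toLinearMap ∘ₗ S.toLinearMap)) := by
        rw [← hS, LinearMap.convWith_assoc op hop]
    _ = φ := by rw [hSS, LinearMap.convWith_counit_right op u φ hu_right, LinearMap.comp_id]

theorem CoalgHom.toConv_flip_curry_one {R C A : Type*} [CommRing R] [AddCommGroup C] [Module R C]
    [Coalgebra R C] [Ring A] [HopfAlgebra R A] (m : C ⊗[R] A →ₗc[R] A)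
    (hm_mul : ∀ u v : A, toConv ((curry m.toLinearMap).flip (u * v))
      = toConv ((curry m.toLinearMap).flip u) * toConv ((curry m.toLinearMap).flip v)) :
    toConv ((curry m.toLinearMap).flip 1) = 1 := by
  let N : C →ₗc[R] A := m.comp <|
    (CoalgHom.lTensor C (Bialgebra.unitBialgHom R A : R →ₗc[R] A)).comp
      (Coalgebra.TensorProduct.rid R R C).symm.toCoalgHom
  have hN : N.toLinearMap = (curry m.toLinearMap).flip 1 := by
    ext x
    simp [N]
  rw [← hN]
  refine HopfAlgebra.toConv_coalgHom_eq_one_of_mul_self N ?_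
  rw [hN, ← hm_mul, one_mul]

namespace WeakTwistedPostHopf

variable {k H : Type*} [Field k] [Ring H] [HopfAlgebra k H]

theorem toConv_flip_curry_mbar (Φ : H →ₗ[k] H) (m : H ⊗[k] H →ₗ[k] H) (y : H) :
    toConv ((curry (mbar k Φ m)).flip y) = toConv Φ * toConv ((curry m).flip y) := by
  ext x
  rw [(ℛ k x).convMul_apply]
  simp [mbar, ← (ℛ k x).eq, sum_tmul]

theorem mbar_tmul_one (Φ : H →ₗ[k] H) (m : H ⊗[k] H →ₗc[k] H)
    (hm_mul : ∀ u v : H, toConv ((curry m.toLinearMap).flip (u * v))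
      = toConv ((curry m.toLinearMap).flip u) * toConv ((curry m.toLinearMap).flip v))
    (x : H) : mbar k Φ m (x ⊗ₜ 1) = Φ x := by
  have := congr($(toConv_flip_curry_mbar Φ m.toLinearMap 1) x)
  rwa [m.toConv_flip_curry_one hm_mul, mul_one] at this

theorem toConv_flip_curry_mbar_mul (Φ : H →ₗ[k] H) (m : H ⊗[k] H →ₗ[k] H)
    (hm_mul : ∀ u v : H, toConv ((curry m).flip (u * v))
      = toConv ((curry m).flip u) * toConv ((curry m).flip v)) (y z : H) :
    toConv ((curry (mbar k Φ m)).flip (y * z))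
      = toConv ((curry (mbar k Φ m)).flip y) * toConv ((curry m).flip z) := by
  rw [toConv_flip_curry_mbar, toConv_flip_curry_mbar, hm_mul, mul_assoc]

/-- Cocommutativity enters here: it makes `comul : H → H ⊗ H` a coalgebra map. -/
noncomputable def mbarCoalgHom [IsCocomm k H] (Φ : H →ₗc[k] H) (m : H ⊗[k] H →ₗc[k] H) :
    H ⊗[k] H →ₗc[k] H :=
  (Bialgebra.mulCoalgHom k H).comp <| (Coalgebra.TensorProduct.map Φ m).comp <|
    (Coalgebra.TensorProduct.assoc k k H H H).toCoalgHom.comp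
      (CoalgHom.rTensor H (comulCoalgHom k H))

theorem mbarCoalgHom_apply [IsCocomm k H] (Φ : H →ₗc[k] H) (m : H ⊗[k] H →ₗc[k] H)
    (x : H ⊗[k] H) : mbarCoalgHom Φ m x = mbar k Φ m x := by
  induction x with
  | zero => simp
  | add x y hx hy => simp only [map_add, hx, hy]
  | tmul x y => rfl

theorem mbar_assoc [IsCocomm k H] (Φ : H →ₗc[k] H) (m : H ⊗[k] H →ₗc[k] H)
    (hΦ : ∀ x y : H, Φ (mbar k Φ m (x ⊗ₜ y)) = mbar k Φ m (x ⊗ₜ Φ y))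
    (hm_assoc : ∀ x y z : H, m (x ⊗ₜ m (y ⊗ₜ z)) = m (mbar k Φ m (x ⊗ₜ y) ⊗ₜ z))
    (hm_mul : ∀ u v : H, toConv ((curry m.toLinearMap).flip (u * v))
      = toConv ((curry m.toLinearMap).flip u) * toConv ((curry m.toLinearMap).flip v))
    (a b c : H) :
    mbar k Φ m (mbar k Φ m (a ⊗ₜ b) ⊗ₜ c) = mbar k Φ m (a ⊗ₜ mbar k Φ m (b ⊗ₜ c)) := by
  set ra := ℛ k a
  set rb := ℛ k b
  have hmbar (x y : H) : mbar k Φ m (x ⊗ₜ y)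
      = (toConv Φ.toLinearMap * toConv ((curry m.toLinearMap).flip y)) x :=
    congr($(toConv_flip_curry_mbar Φ.toLinearMap m.toLinearMap y) x)
  calc mbar k Φ m (mbar k Φ m (a ⊗ₜ b) ⊗ₜ c)
      = ∑ z ∈ ra.index ×ˢ rb.index, Φ (mbar k Φ m (ra.left z.1 ⊗ₜ rb.left z.2))
          * m (mbar k Φ m (ra.right z.1 ⊗ₜ rb.right z.2) ⊗ₜ c) := by
        rw [hmbar, ← mbarCoalgHom_apply, ((ra.tmul rb).induced (mbarCoalgHom Φ m)).convMul_apply]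
        simp [mbarCoalgHom_apply]
    _ = ∑ p ∈ rb.index, ∑ i ∈ ra.index, mbar k Φ m (ra.left i ⊗ₜ Φ (rb.left p))
          * m (ra.right i ⊗ₜ m (rb.right p ⊗ₜ c)) := by
        simp only [hΦ, hm_assoc, Finset.sum_product_right]
    _ = ∑ p ∈ rb.index, mbar k Φ m (a ⊗ₜ (Φ (rb.left p) * m (rb.right p ⊗ₜ c))) := by
        refine Finset.sum_congr rfl fun p _ => ?_
        have := congr($(toConv_flip_curry_mbar_mul Φ.toLinearMap m.toLinearMap hm_mul
          (Φ (rb.left p)) (m (rb.right p ⊗ₜ c))) a)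
        rw [ra.convMul_apply] at this
        simpa using this.symm
    _ = mbar k Φ m (a ⊗ₜ mbar k Φ m (b ⊗ₜ c)) := by
        rw [hmbar b, rb.convMul_apply, tmul_sum, map_sum]
        rfl

end WeakTwistedPostHopf

theorem stmt14 (k H : Type*) [Field k] [Ring H] [HopfAlgebra k H]
    (m : H ⊗[k] H →ₗ[k] H) (Φ : H →ₗ[k] H)
    (hm_comul : Coalgebra.comul ∘ₗ m
      = (TensorProduct.map m m) ∘ₗ (TensorProduct.tensorTensorTensorComm k H H H H).toLinearMap
          ∘ₗ (TensorProduct.map Coalgebra.comul Coalgebra.comul))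
    (hm_counit : Coalgebra.counit ∘ₗ m
      = (TensorProduct.lid k k).toLinearMap ∘ₗ
          TensorProduct.map Coalgebra.counit Coalgebra.counit)
    (hΦ_comul : Coalgebra.comul ∘ₗ Φ = TensorProduct.map Φ Φ ∘ₗ Coalgebra.comul)
    (hΦ_counit : Coalgebra.counit ∘ₗ Φ = Coalgebra.counit)
    (h3 : Φ ∘ₗ mbar k Φ m = mbar k Φ m ∘ₗ TensorProduct.map LinearMap.id Φ)
    (h4 : m ∘ₗ TensorProduct.map LinearMap.id m
      = m ∘ₗ TensorProduct.map (mbar k Φ m) LinearMap.id ∘ₗ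
          (TensorProduct.assoc k H H H).symm.toLinearMap)
    (h5 : m ∘ₗ TensorProduct.map LinearMap.id (LinearMap.mul' k H)
      = (LinearMap.mul' k H) ∘ₗ TensorProduct.map m m ∘ₗ
          (TensorProduct.tensorTensorTensorComm k H H H H).toLinearMap ∘ₗ
          TensorProduct.map Coalgebra.comul LinearMap.id)
    (hcoc : ∀ a : H, (TensorProduct.comm k H H) (Coalgebra.comul (R := k) a)
      = Coalgebra.comul a)
    (hmbar1 : ∀ a : H, mbar k Φ m ((1 : H) ⊗ₜ[k] a) = a)
    (S : H →ₗ[k] H)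
    (hS_comul : Coalgebra.comul ∘ₗ S = TensorProduct.map S S ∘ₗ Coalgebra.comul)
    (hS_counit : Coalgebra.counit ∘ₗ S = Coalgebra.counit)
    (hS : ∀ a : H, mbar k Φ m (TensorProduct.map LinearMap.id S (Coalgebra.comul a))
      = (Coalgebra.counit (R := k) a) • (1 : H)) :
    ∀ a : H, S (S a) = Φ a := by
  have : IsCocomm k H := ⟨LinearMap.ext hcoc⟩
  let mc : H ⊗[k] H →ₗc[k] H :=
    { m with
      map_comp_comul := by rw [hm_comul]; rfl
      counit_comp := by rw [hm_counit]; ext; simp [mul_comm] }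
  let Φc : H →ₗc[k] H := { Φ with map_comp_comul := hΦ_comul.symm, counit_comp := hΦ_counit }
  let Sc : H →ₗc[k] H := { S with map_comp_comul := hS_comul.symm, counit_comp := hS_counit }
  have hm_mul (u v : H) : toConv ((curry mc.toLinearMap).flip (u * v))
      = toConv ((curry mc.toLinearMap).flip u) * toConv ((curry mc.toLinearMap).flip v) := by
    ext x
    rw [(ℛ k x).convMul_apply]
    simpa [mc, ← (ℛ k x).eq, sum_tmul] using congr($h5 (x ⊗ₜ (u ⊗ₜ v)))
  have hSS := Sc.comp_self_eq_of_convWith_id_eq (mbar k Φ m)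
    (WeakTwistedPostHopf.mbar_assoc Φc mc (fun x y => congr($h3 (x ⊗ₜ y)))
      (fun x y z => by simpa [mc, Φc] using congr($h4 (x ⊗ₜ (y ⊗ₜ z)))) hm_mul)
    1 Φ hmbar1 (WeakTwistedPostHopf.mbar_tmul_one Φ mc hm_mul)
    (by ext a; simpa [LinearMap.convWith, Sc] using hS a)
  exact fun a => congr($hSS a)
end

section
/- Let H and B be Hopf algebras over a field k with H cocommutative, let ▷ : B ⊗ H → H make H a left B-module algebra and module coalgebra, and let T : H → B be a coalgebra morphism with cocycle Ψ : H → H (a coalgebra morphism) satisfying (i) T(a)T(b) = T(Ψ(a₁)·(T(a₂) ▷ b)) and (ii) Ψ(Ψ(a₁)·(T(a₂) ▷ b)) = Ψ(a₁)·(T(a₂) ▷ Ψ(b)) for all a,b ∈ H. Then the product ã∗b := Ψ(a₁)·(T(a₂) ▷ b) on H is associative. -/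
open TensorProduct

section PureShuffles

variable {R : Type*} [CommSemiring R]
variable {M₁ M₂ M₃ M₄ : Type*}
  [AddCommMonoid M₁] [AddCommMonoid M₂] [AddCommMonoid M₃] [AddCommMonoid M₄]
  [Module R M₁] [Module R M₂] [Module R M₃] [Module R M₄]

lemma stmt16_ttt_decomp :
    (tensorTensorTensorComm R M₁ M₂ M₃ M₄).toLinearMap
      = (TensorProduct.assoc R M₁ M₃ (M₂ ⊗[R] M₄)).symm.toLinearMap
        ∘ₗ map LinearMap.id (TensorProduct.assoc R M₃ M₂ M₄).toLinearMap
        ∘ₗ map LinearMap.id (map (TensorProduct.comm R M₂ M₃).toLinearMap LinearMap.id)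
        ∘ₗ map LinearMap.id (TensorProduct.assoc R M₂ M₃ M₄).symm.toLinearMap
        ∘ₗ (TensorProduct.assoc R M₁ M₂ (M₃ ⊗[R] M₄)).toLinearMap := by
  ext
  simp

lemma stmt16_ps10 {A B C D E : Type*} [AddCommMonoid A] [AddCommMonoid B] [AddCommMonoid C]
    [AddCommMonoid D] [AddCommMonoid E] [Module R A] [Module R B] [Module R C] [Module R D]
    [Module R E] (f : C →ₗ[R] D ⊗[R] E) :
    map LinearMap.id (TensorProduct.assoc R B D E).symm.toLinearMap
      ∘ₗ (TensorProduct.assoc R A B (D ⊗[R] E)).toLinearMap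
      ∘ₗ map LinearMap.id f
      ∘ₗ (TensorProduct.assoc R A B C).symm.toLinearMap
    = map LinearMap.id ((TensorProduct.assoc R B D E).symm.toLinearMap ∘ₗ map LinearMap.id f) := by
  ext
  simp

end PureShuffles

section Defs

variable (k : Type*) {H B : Type*} [Field k] [Ring H] [HopfAlgebra k H]
  [Ring B] [HopfAlgebra k B]

noncomputable def sFm (Ψ : H →ₗ[k] H) (P : H ⊗[k] H →ₗ[k] H) :
    (H ⊗[k] H) ⊗[k] H →ₗ[k] H :=
  LinearMap.mul' k H ∘ₗ map Ψ P ∘ₗ (TensorProduct.assoc k H H H).toLinearMap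

lemma mbar_eq (Ψ : H →ₗ[k] H) (P : H ⊗[k] H →ₗ[k] H) :
    mbar k Ψ P = sFm k Ψ P ∘ₗ map Coalgebra.comul LinearMap.id := rfl

lemma mbar_apply (Ψ : H →ₗ[k] H) (P : H ⊗[k] H →ₗ[k] H) (x : H) (y : H) :
    mbar k Ψ P (x ⊗ₜ[k] y) = sFm k Ψ P (Coalgebra.comul x ⊗ₜ[k] y) := rfl

variable (φ : B ⊗[k] H →ₗ[k] H) (T : H →ₗ[k] B) (Ψ : H →ₗ[k] H)

noncomputable def sR₂ : (H ⊗[k] H) ⊗[k] ((H ⊗[k] H) ⊗[k] H) →ₗ[k] H :=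
  LinearMap.mul' k H ∘ₗ map φ φ ∘ₗ (tensorTensorTensorComm k B B H H).toLinearMap
    ∘ₗ map (map T T)
        (map Ψ (φ ∘ₗ map T LinearMap.id) ∘ₗ (TensorProduct.assoc k H H H).toLinearMap)

noncomputable def sK : (H ⊗[k] (H ⊗[k] H)) ⊗[k] ((H ⊗[k] H) ⊗[k] H) →ₗ[k] H :=
  LinearMap.mul' k H ∘ₗ map Ψ (sR₂ k φ T Ψ)
    ∘ₗ (TensorProduct.assoc k H (H ⊗[k] H) ((H ⊗[k] H) ⊗[k] H)).toLinearMap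

noncomputable def sP₂ : (H ⊗[k] H) ⊗[k] H →ₗ[k] H :=
  (φ ∘ₗ map T LinearMap.id) ∘ₗ map LinearMap.id (φ ∘ₗ map T LinearMap.id)
    ∘ₗ (TensorProduct.assoc k H H H).toLinearMap

noncomputable def sL₄ : (((H ⊗[k] H) ⊗[k] H) ⊗[k] (H ⊗[k] H)) ⊗[k] H →ₗ[k] H :=
  LinearMap.mul' k H
    ∘ₗ map (sFm k Ψ (φ ∘ₗ map T LinearMap.id) ∘ₗ map LinearMap.id Ψ) (sP₂ k φ T)
    ∘ₗ (TensorProduct.assoc k ((H ⊗[k] H) ⊗[k] H) (H ⊗[k] H) H).toLinearMap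

noncomputable def sσ : (H ⊗[k] (H ⊗[k] H)) ⊗[k] (H ⊗[k] H) →ₗ[k]
    ((H ⊗[k] H) ⊗[k] H) ⊗[k] (H ⊗[k] H) :=
  (tensorTensorTensorComm k (H ⊗[k] H) H H H).toLinearMap
    ∘ₗ map (TensorProduct.assoc k H H H).symm.toLinearMap LinearMap.id

noncomputable def sML : (H ⊗[k] H) ⊗[k] ((H ⊗[k] H) ⊗[k] (H ⊗[k] H)) →ₗ[k] H ⊗[k] H :=
  LinearMap.mul' k (H ⊗[k] H)
    ∘ₗ map (map Ψ Ψ) (map (φ ∘ₗ map T LinearMap.id) (φ ∘ₗ map T LinearMap.id)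
        ∘ₗ (tensorTensorTensorComm k H H H H).toLinearMap)

lemma sPS1 : sML k φ T Ψ
      ∘ₗ (TensorProduct.assoc k (H ⊗[k] H) (H ⊗[k] H) (H ⊗[k] H)).toLinearMap
    = map (sFm k Ψ (φ ∘ₗ map T LinearMap.id)) (sFm k Ψ (φ ∘ₗ map T LinearMap.id))
      ∘ₗ (tensorTensorTensorComm k (H ⊗[k] H) (H ⊗[k] H) H H).toLinearMap
      ∘ₗ map (tensorTensorTensorComm k H H H H).toLinearMap LinearMap.id := by
  ext
  simp [sML, sFm, LinearMap.mul'_apply, Algebra.TensorProduct.tmul_mul_tmul]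

lemma sPS4 : sL₄ k φ T Ψ ∘ₗ map (sσ k) LinearMap.id
    = sK k φ T Ψ ∘ₗ (TensorProduct.assoc k (H ⊗[k] (H ⊗[k] H)) (H ⊗[k] H) H).toLinearMap := by
  ext
  simp [sL₄, sK, sσ, sR₂, sP₂, sFm, LinearMap.mul'_apply, mul_assoc]

lemma sPS5 : map (map (Coalgebra.comul (R := k) (A := H)) LinearMap.id) LinearMap.id
      ∘ₗ (tensorTensorTensorComm k H H H H).toLinearMap
    = (tensorTensorTensorComm k (H ⊗[k] H) H H H).toLinearMap
      ∘ₗ map (map Coalgebra.comul LinearMap.id) LinearMap.id := by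
  ext
  simp

lemma sPS7 : map (map (Coalgebra.comul (R := k) (A := H)) LinearMap.id)
        (map Coalgebra.comul LinearMap.id)
      ∘ₗ (tensorTensorTensorComm k H H H H).toLinearMap
    = (tensorTensorTensorComm k (H ⊗[k] H) (H ⊗[k] H) H H).toLinearMap
      ∘ₗ map (map Coalgebra.comul Coalgebra.comul) LinearMap.id := by
  ext
  simp

lemma sPS8 : map φ φ ∘ₗ (tensorTensorTensorComm k B B H H).toLinearMap
      ∘ₗ map (map T T) LinearMap.id
    = map (φ ∘ₗ map T LinearMap.id) (φ ∘ₗ map T LinearMap.id)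
      ∘ₗ (tensorTensorTensorComm k H H H H).toLinearMap := by
  ext
  simp

lemma stmt16_D (hcoc : ∀ a : H, TensorProduct.comm k H H (Coalgebra.comul (R := k) a)
      = Coalgebra.comul a) (x : H) :
    (tensorTensorTensorComm k H H H H) (map Coalgebra.comul Coalgebra.comul
        (Coalgebra.comul (R := k) x))
      = map Coalgebra.comul Coalgebra.comul (Coalgebra.comul (R := k) x) := by
  have hτ : (TensorProduct.comm k H H).toLinearMap ∘ₗ (Coalgebra.comul (R := k) (A := H))
      = Coalgebra.comul := LinearMap.ext hcoc
  have hfact : (map Coalgebra.comul Coalgebra.comul :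
        H ⊗[k] H →ₗ[k] (H ⊗[k] H) ⊗[k] (H ⊗[k] H))
      = map LinearMap.id Coalgebra.comul ∘ₗ map Coalgebra.comul LinearMap.id := by
    rw [← map_comp]; simp
  have hco : (map Coalgebra.comul LinearMap.id) (Coalgebra.comul (R := k) x)
      = (TensorProduct.assoc k H H H).symm
          (map LinearMap.id Coalgebra.comul (Coalgebra.comul (R := k) x)) := by
    rw [LinearEquiv.eq_symm_apply]
    exact Coalgebra.coassoc_apply x
  have hXY : map Coalgebra.comul Coalgebra.comul (Coalgebra.comul (R := k) x)
      = map LinearMap.id Coalgebra.comul ((TensorProduct.assoc k H H H).symm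
          (map LinearMap.id Coalgebra.comul (Coalgebra.comul (R := k) x))) := by
    rw [hfact, LinearMap.comp_apply, hco]
  have hgΔ : ((TensorProduct.assoc k H H H).symm.toLinearMap
        ∘ₗ map LinearMap.id Coalgebra.comul) ∘ₗ (Coalgebra.comul (R := k) (A := H))
      = map Coalgebra.comul LinearMap.id ∘ₗ Coalgebra.comul := by
    rw [LinearMap.comp_assoc]
    exact Coalgebra.coassoc_symm
  have h10 := LinearMap.congr_fun (stmt16_ps10 (R := k) (A := H) (B := H)
      (Coalgebra.comul : H →ₗ[k] H ⊗[k] H))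
      (map LinearMap.id Coalgebra.comul (Coalgebra.comul (R := k) x))
  simp only [LinearMap.comp_apply, LinearEquiv.coe_coe] at h10
  rw [← hXY] at h10
  have h11 : (map LinearMap.id ((TensorProduct.assoc k H H H).symm.toLinearMap
          ∘ₗ map LinearMap.id Coalgebra.comul))
        (map LinearMap.id Coalgebra.comul (Coalgebra.comul (R := k) x))
      = map LinearMap.id (map Coalgebra.comul LinearMap.id ∘ₗ Coalgebra.comul)
          (Coalgebra.comul (R := k) x) := by
    rw [← LinearMap.comp_apply, ← map_comp, hgΔ]
    simp
  have hV1 := h10.trans h11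
  have hVτ : map LinearMap.id (map (TensorProduct.comm k H H).toLinearMap LinearMap.id)
        (map LinearMap.id (map Coalgebra.comul LinearMap.id ∘ₗ Coalgebra.comul)
          (Coalgebra.comul (R := k) x))
      = map LinearMap.id (map Coalgebra.comul LinearMap.id ∘ₗ Coalgebra.comul)
          (Coalgebra.comul (R := k) x) := by
    rw [← LinearMap.comp_apply, ← map_comp]
    have h2 : (map (TensorProduct.comm k H H).toLinearMap LinearMap.id)
          ∘ₗ (map Coalgebra.comul LinearMap.id ∘ₗ (Coalgebra.comul (R := k) (A := H)))
        = map Coalgebra.comul LinearMap.id ∘ₗ Coalgebra.comul := by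
      rw [← LinearMap.comp_assoc, ← map_comp, hτ]
      simp
    rw [h2]
    simp
  have hc1 : ∀ w : H ⊗[k] (H ⊗[k] (H ⊗[k] H)),
      map (LinearMap.id : H →ₗ[k] H) (TensorProduct.assoc k H H H).toLinearMap
        (map LinearMap.id (TensorProduct.assoc k H H H).symm.toLinearMap w) = w := by
    intro w
    rw [← LinearMap.comp_apply, ← map_comp]
    simp
  have hXV : (TensorProduct.assoc k H H (H ⊗[k] H))
        (map Coalgebra.comul Coalgebra.comul (Coalgebra.comul (R := k) x))
      = map LinearMap.id (TensorProduct.assoc k H H H).toLinearMap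
          (map LinearMap.id (map Coalgebra.comul LinearMap.id ∘ₗ Coalgebra.comul)
            (Coalgebra.comul (R := k) x)) :=
    (hc1 _).symm.trans (congrArg _ hV1)
  have hdec := LinearMap.congr_fun (stmt16_ttt_decomp (R := k) (M₁ := H) (M₂ := H) (M₃ := H)
      (M₄ := H)) (map Coalgebra.comul Coalgebra.comul (Coalgebra.comul (R := k) x))
  simp only [LinearMap.comp_apply, LinearEquiv.coe_coe] at hdec
  rw [hdec, hV1, hVτ, ← hXV]
  exact LinearEquiv.symm_apply_apply _ _

lemma sA1
    (hφ_comul : Coalgebra.comul ∘ₗ φ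
      = TensorProduct.map φ φ ∘ₗ
          (TensorProduct.tensorTensorTensorComm k B B H H).toLinearMap ∘ₗ
          TensorProduct.map Coalgebra.comul Coalgebra.comul)
    (hT_comul : Coalgebra.comul ∘ₗ T = TensorProduct.map T T ∘ₗ Coalgebra.comul)
    (hΨ_comul : Coalgebra.comul ∘ₗ Ψ = TensorProduct.map Ψ Ψ ∘ₗ Coalgebra.comul) :
    (Coalgebra.comul (R := k) (A := H)) ∘ₗ sFm k Ψ (φ ∘ₗ map T LinearMap.id)
      = sML k φ T Ψ
        ∘ₗ (TensorProduct.assoc k (H ⊗[k] H) (H ⊗[k] H) (H ⊗[k] H)).toLinearMap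
        ∘ₗ map (map Coalgebra.comul Coalgebra.comul) Coalgebra.comul := by
  ext x y z
  simp only [sFm, sML, LinearMap.comp_apply, map_tmul, assoc_tmul, LinearMap.id_apply,
    LinearMap.mul'_apply, LinearEquiv.coe_coe, AlgebraTensorModule.curry_apply,
    curry_apply, LinearMap.coe_restrictScalars]
  rw [Bialgebra.comul_mul]
  congr 1
  · exact LinearMap.congr_fun hΨ_comul x
  · have h1 := LinearMap.congr_fun hφ_comul ((T y) ⊗ₜ[k] z)
    simp only [LinearMap.comp_apply, map_tmul, LinearEquiv.coe_coe] at h1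
    have h2 := LinearMap.congr_fun hT_comul y
    simp only [LinearMap.comp_apply] at h2
    rw [h1, h2]
    have h3 := LinearMap.congr_fun (sPS8 k φ T)
      ((Coalgebra.comul (R := k) y) ⊗ₜ[k] (Coalgebra.comul (R := k) z))
    simp only [LinearMap.comp_apply, map_tmul, LinearMap.id_apply, LinearEquiv.coe_coe] at h3
    exact h3

lemma sA
    (hφ_comul : Coalgebra.comul ∘ₗ φ
      = TensorProduct.map φ φ ∘ₗ
          (TensorProduct.tensorTensorTensorComm k B B H H).toLinearMap ∘ₗ
          TensorProduct.map Coalgebra.comul Coalgebra.comul)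
    (hT_comul : Coalgebra.comul ∘ₗ T = TensorProduct.map T T ∘ₗ Coalgebra.comul)
    (hΨ_comul : Coalgebra.comul ∘ₗ Ψ = TensorProduct.map Ψ Ψ ∘ₗ Coalgebra.comul)
    (hcoc : ∀ a : H, TensorProduct.comm k H H (Coalgebra.comul (R := k) a)
      = Coalgebra.comul a) (x y : H) :
    Coalgebra.comul (mbar k Ψ (φ ∘ₗ map T LinearMap.id) (x ⊗ₜ[k] y))
    = map (mbar k Ψ (φ ∘ₗ map T LinearMap.id)) (mbar k Ψ (φ ∘ₗ map T LinearMap.id))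
        ((tensorTensorTensorComm k H H H H) (Coalgebra.comul x ⊗ₜ[k] Coalgebra.comul y)) := by
  rw [mbar_apply]
  have e2 : Coalgebra.comul (sFm k Ψ (φ ∘ₗ map T LinearMap.id) (Coalgebra.comul x ⊗ₜ[k] y))
      = sML k φ T Ψ ((TensorProduct.assoc k (H ⊗[k] H) (H ⊗[k] H) (H ⊗[k] H))
          ((map (map Coalgebra.comul Coalgebra.comul) Coalgebra.comul)
            (Coalgebra.comul x ⊗ₜ[k] y))) := by
    have h := LinearMap.congr_fun (sA1 k φ T Ψ hφ_comul hT_comul hΨ_comul)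
      (Coalgebra.comul x ⊗ₜ[k] y)
    simpa only [LinearMap.comp_apply, LinearEquiv.coe_coe] using h
  rw [e2, map_tmul]
  have e3 := LinearMap.congr_fun (sPS1 k φ T Ψ)
    ((map Coalgebra.comul Coalgebra.comul (Coalgebra.comul (R := k) x))
      ⊗ₜ[k] (Coalgebra.comul y))
  simp only [LinearMap.comp_apply, LinearEquiv.coe_coe, map_tmul, LinearMap.id_apply] at e3
  rw [e3, stmt16_D k hcoc x]
  have e4 := LinearMap.congr_fun (sPS7 k (H := H))
    (Coalgebra.comul x ⊗ₜ[k] Coalgebra.comul y)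
  simp only [LinearMap.comp_apply, LinearEquiv.coe_coe, map_tmul, LinearMap.id_apply] at e4
  rw [mbar_eq k Ψ (φ ∘ₗ map T LinearMap.id), map_comp, LinearMap.comp_apply, e4]

end Defs

section Final

variable (k : Type*) {H B : Type*} [Field k] [Ring H] [HopfAlgebra k H]
  [Ring B] [HopfAlgebra k B]
variable (φ : B ⊗[k] H →ₗ[k] H) (T : H →ₗ[k] B) (Ψ : H →ₗ[k] H)

lemma sL23
    (hφ_act : ∀ (x y : B) (a : H), φ ((x * y) ⊗ₜ[k] a) = φ (x ⊗ₜ[k] φ (y ⊗ₜ[k] a)))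
    (hi : (LinearMap.mul' k B) ∘ₗ TensorProduct.map T T
      = T ∘ₗ mbar k Ψ (φ ∘ₗ TensorProduct.map T LinearMap.id))
    (hii : Ψ ∘ₗ mbar k Ψ (φ ∘ₗ TensorProduct.map T LinearMap.id)
      = mbar k Ψ (φ ∘ₗ TensorProduct.map T LinearMap.id) ∘ₗ
          TensorProduct.map LinearMap.id Ψ) :
    sFm k Ψ (φ ∘ₗ map T LinearMap.id)
        ∘ₗ map (map (mbar k Ψ (φ ∘ₗ map T LinearMap.id))
            (mbar k Ψ (φ ∘ₗ map T LinearMap.id))) LinearMap.id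
      = sL₄ k φ T Ψ
        ∘ₗ map (map (map Coalgebra.comul LinearMap.id) LinearMap.id) LinearMap.id := by
  ext p q r s c
  simp only [sFm, sL₄, sP₂, LinearMap.comp_apply, map_tmul, assoc_tmul, LinearMap.id_apply,
    LinearMap.mul'_apply, LinearEquiv.coe_coe, AlgebraTensorModule.curry_apply,
    curry_apply, LinearMap.coe_restrictScalars]
  have h1 := LinearMap.congr_fun hii (p ⊗ₜ[k] q)
  simp only [LinearMap.comp_apply, map_tmul, LinearMap.id_apply] at h1
  have h2 := LinearMap.congr_fun hi (r ⊗ₜ[k] s)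
  simp only [LinearMap.comp_apply, map_tmul, LinearMap.mul'_apply] at h2
  rw [h1, ← h2, hφ_act (T r) (T s) c, mbar_apply]
  simp only [sFm, LinearMap.comp_apply, LinearEquiv.coe_coe]

lemma sR
    (hφ_mul : φ ∘ₗ TensorProduct.map LinearMap.id (LinearMap.mul' k H)
      = (LinearMap.mul' k H) ∘ₗ TensorProduct.map φ φ ∘ₗ
          (TensorProduct.tensorTensorTensorComm k B B H H).toLinearMap ∘ₗ
          TensorProduct.map Coalgebra.comul LinearMap.id)
    (hT_comul : Coalgebra.comul ∘ₗ T = TensorProduct.map T T ∘ₗ Coalgebra.comul) :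
    sFm k Ψ (φ ∘ₗ map T LinearMap.id)
        ∘ₗ map LinearMap.id (sFm k Ψ (φ ∘ₗ map T LinearMap.id))
      = sK k φ T Ψ ∘ₗ map (map LinearMap.id Coalgebra.comul) LinearMap.id := by
  ext x y u v c
  simp only [sFm, sK, sR₂, LinearMap.comp_apply, map_tmul, assoc_tmul, LinearMap.id_apply,
    LinearMap.mul'_apply, LinearEquiv.coe_coe, AlgebraTensorModule.curry_apply,
    curry_apply, LinearMap.coe_restrictScalars]
  have h1 := LinearMap.congr_fun hφ_mul
    ((T y) ⊗ₜ[k] ((Ψ u) ⊗ₜ[k] (φ ((T v) ⊗ₜ[k] c))))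
  simp only [LinearMap.comp_apply, map_tmul, LinearMap.id_apply, LinearMap.mul'_apply,
    LinearEquiv.coe_coe] at h1
  have h2 := LinearMap.congr_fun hT_comul y
  simp only [LinearMap.comp_apply] at h2
  rw [h1, h2]

end Final

theorem stmt16 (k H B : Type*) [Field k] [Ring H] [HopfAlgebra k H]
    [Ring B] [HopfAlgebra k B]
    (φ : B ⊗[k] H →ₗ[k] H)
    (hφ_act : ∀ (x y : B) (a : H), φ ((x * y) ⊗ₜ[k] a) = φ (x ⊗ₜ[k] φ (y ⊗ₜ[k] a)))
    (hφ_one : ∀ a : H, φ ((1 : B) ⊗ₜ[k] a) = a)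
    (hφ_mul : φ ∘ₗ TensorProduct.map LinearMap.id (LinearMap.mul' k H)
      = (LinearMap.mul' k H) ∘ₗ TensorProduct.map φ φ ∘ₗ
          (TensorProduct.tensorTensorTensorComm k B B H H).toLinearMap ∘ₗ
          TensorProduct.map Coalgebra.comul LinearMap.id)
    (hφ_unit : ∀ x : B, φ (x ⊗ₜ[k] (1 : H)) = (Coalgebra.counit (R := k) x) • (1 : H))
    (hφ_comul : Coalgebra.comul ∘ₗ φ
      = TensorProduct.map φ φ ∘ₗ
          (TensorProduct.tensorTensorTensorComm k B B H H).toLinearMap ∘ₗ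
          TensorProduct.map Coalgebra.comul Coalgebra.comul)
    (hφ_counit : Coalgebra.counit ∘ₗ φ
      = (TensorProduct.lid k k).toLinearMap ∘ₗ
          TensorProduct.map Coalgebra.counit Coalgebra.counit)
    (T : H →ₗ[k] B) (Ψ : H →ₗ[k] H)
    (hT_comul : Coalgebra.comul ∘ₗ T = TensorProduct.map T T ∘ₗ Coalgebra.comul)
    (hT_counit : Coalgebra.counit ∘ₗ T = Coalgebra.counit)
    (hΨ_comul : Coalgebra.comul ∘ₗ Ψ = TensorProduct.map Ψ Ψ ∘ₗ Coalgebra.comul)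
    (hΨ_counit : Coalgebra.counit ∘ₗ Ψ = Coalgebra.counit)
    (hi : (LinearMap.mul' k B) ∘ₗ TensorProduct.map T T
      = T ∘ₗ mbar k Ψ (φ ∘ₗ TensorProduct.map T LinearMap.id))
    (hii : Ψ ∘ₗ mbar k Ψ (φ ∘ₗ TensorProduct.map T LinearMap.id)
      = mbar k Ψ (φ ∘ₗ TensorProduct.map T LinearMap.id) ∘ₗ
          TensorProduct.map LinearMap.id Ψ)
    (hcoc : ∀ a : H, (TensorProduct.comm k H H) (Coalgebra.comul (R := k) a)
      = Coalgebra.comul a) :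
    ∀ a b c : H,
      mbar k Ψ (φ ∘ₗ TensorProduct.map T LinearMap.id)
        (mbar k Ψ (φ ∘ₗ TensorProduct.map T LinearMap.id) (a ⊗ₜ[k] b) ⊗ₜ[k] c)
      = mbar k Ψ (φ ∘ₗ TensorProduct.map T LinearMap.id)
          (a ⊗ₜ[k] mbar k Ψ (φ ∘ₗ TensorProduct.map T LinearMap.id) (b ⊗ₜ[k] c)) := by
  intro a b c
  rw [mbar_apply k Ψ (φ ∘ₗ map T LinearMap.id)
      (mbar k Ψ (φ ∘ₗ map T LinearMap.id) (a ⊗ₜ[k] b)) c]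
  rw [sA k φ T Ψ hφ_comul hT_comul hΨ_comul hcoc a b]
  have step2 : sFm k Ψ (φ ∘ₗ map T LinearMap.id)
        ((map (mbar k Ψ (φ ∘ₗ map T LinearMap.id)) (mbar k Ψ (φ ∘ₗ map T LinearMap.id))
            ((tensorTensorTensorComm k H H H H)
              (Coalgebra.comul a ⊗ₜ[k] Coalgebra.comul b))) ⊗ₜ[k] c)
      = (sFm k Ψ (φ ∘ₗ map T LinearMap.id)
          ∘ₗ map (map (mbar k Ψ (φ ∘ₗ map T LinearMap.id))
              (mbar k Ψ (φ ∘ₗ map T LinearMap.id))) LinearMap.id)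
          (((tensorTensorTensorComm k H H H H)
              (Coalgebra.comul a ⊗ₜ[k] Coalgebra.comul b)) ⊗ₜ[k] c) := by
    simp only [LinearMap.comp_apply, map_tmul, LinearMap.id_apply]
  rw [step2, sL23 k φ T Ψ hφ_act hi hii]
  simp only [LinearMap.comp_apply, map_tmul, LinearMap.id_apply]
  have e5 := LinearMap.congr_fun (sPS5 k (H := H))
    ((Coalgebra.comul (R := k) a) ⊗ₜ[k] (Coalgebra.comul (R := k) b))
  simp only [LinearMap.comp_apply, map_tmul, LinearMap.id_apply, LinearEquiv.coe_coe] at e5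
  rw [e5]
  have hcoa : map Coalgebra.comul LinearMap.id (Coalgebra.comul (R := k) a)
      = (TensorProduct.assoc k H H H).symm
          (map LinearMap.id Coalgebra.comul (Coalgebra.comul (R := k) a)) := by
    rw [LinearEquiv.eq_symm_apply]
    exact Coalgebra.coassoc_apply a
  rw [hcoa]
  have e6 : (tensorTensorTensorComm k (H ⊗[k] H) H H H)
        (((TensorProduct.assoc k H H H).symm
            (map LinearMap.id Coalgebra.comul (Coalgebra.comul (R := k) a)))
          ⊗ₜ[k] Coalgebra.comul b)
      = sσ k ((map LinearMap.id Coalgebra.comul (Coalgebra.comul (R := k) a))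
          ⊗ₜ[k] Coalgebra.comul b) := by
    simp only [sσ, LinearMap.comp_apply, map_tmul, LinearMap.id_apply, LinearEquiv.coe_coe]
  rw [e6]
  have e7 : sL₄ k φ T Ψ (sσ k ((map LinearMap.id Coalgebra.comul
          (Coalgebra.comul (R := k) a)) ⊗ₜ[k] Coalgebra.comul b) ⊗ₜ[k] c)
      = sK k φ T Ψ ((map LinearMap.id Coalgebra.comul (Coalgebra.comul (R := k) a))
          ⊗ₜ[k] (Coalgebra.comul b ⊗ₜ[k] c)) := by
    have h := LinearMap.congr_fun (sPS4 k φ T Ψ)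
      (((map LinearMap.id Coalgebra.comul (Coalgebra.comul (R := k) a))
          ⊗ₜ[k] Coalgebra.comul b) ⊗ₜ[k] c)
    simp only [LinearMap.comp_apply, map_tmul, LinearMap.id_apply, LinearEquiv.coe_coe,
      assoc_tmul] at h
    exact h
  rw [e7]
  rw [mbar_apply k Ψ (φ ∘ₗ map T LinearMap.id) a
      (mbar k Ψ (φ ∘ₗ map T LinearMap.id) (b ⊗ₜ[k] c)),
    mbar_apply k Ψ (φ ∘ₗ map T LinearMap.id) b c]
  have e8 : sFm k Ψ (φ ∘ₗ map T LinearMap.id) ((Coalgebra.comul (R := k) a)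
        ⊗ₜ[k] sFm k Ψ (φ ∘ₗ map T LinearMap.id) ((Coalgebra.comul (R := k) b) ⊗ₜ[k] c))
      = sK k φ T Ψ ((map LinearMap.id Coalgebra.comul (Coalgebra.comul (R := k) a))
          ⊗ₜ[k] (Coalgebra.comul b ⊗ₜ[k] c)) := by
    have h := LinearMap.congr_fun (sR k φ T Ψ hφ_mul hT_comul)
      ((Coalgebra.comul (R := k) a) ⊗ₜ[k] ((Coalgebra.comul (R := k) b) ⊗ₜ[k] c))
    simp only [LinearMap.comp_apply, map_tmul, LinearMap.id_apply] at h
    exact h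
  rw [e8]
end

section
/- Let H be a cocommutative Hopf algebra over a field k and q : H → H an idempotent bialgebra endomorphism (q∘q = q). Then (H, ·, ∘, q) is a Hopf truss, where a ∘ b := q(a)·b; in particular a ∘ (b·c) = (a₁ ∘ b) · λ(q(a₂)) · (a₃ ∘ c) for all a,b,c ∈ H, and ∘ is associative and a coalgebra morphism. -/
/-!
Write `a ∘ b = q(a) b`. Associativity is `q(q(a) b) c = q(a) q(b) c`, which holds because `q` is
multiplicative and idempotent, and `∘` is a coalgebra map because `q` and the multiplication are.
For the truss identity, `q` being a coalgebra map makes `λ ∘ q` a convolution inverse of `q`, so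
`q(a₁) b λ(q(a₂)) q(a₃) c` collapses to `q(a) b c`.
-/

open TensorProduct

open Coalgebra

section Algebra

variable {R A : Type*} [CommSemiring R] [Semiring A] [Algebra R A]

noncomputable def twistedMul (q : A →ₗ[R] A) : A ⊗[R] A →ₗ[R] A :=
  LinearMap.mul' R A ∘ₗ TensorProduct.map q LinearMap.id

@[simp]
theorem twistedMul_tmul (q : A →ₗ[R] A) (a b : A) : twistedMul q (a ⊗ₜ b) = q a * b := rfl

theorem twistedMul_assoc (q : A →ₗ[R] A) (hq_mul : ∀ a b, q (a * b) = q a * q b)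
    (hqq : q ∘ₗ q = q) :
    twistedMul q ∘ₗ TensorProduct.map LinearMap.id (twistedMul q) =
      twistedMul q ∘ₗ TensorProduct.map (twistedMul q) LinearMap.id ∘ₗ
        (TensorProduct.assoc R A A A).symm.toLinearMap := by
  ext a b c
  have hqa : q (q a) = q a := LinearMap.congr_fun hqq a
  simp [hq_mul, hqa, mul_assoc]

theorem map_twistedMul_comp_tensorTensorTensorComm {B : Type*} [Semiring B] [Algebra R B]
    (f : A →ₗ[R] A) (g : B →ₗ[R] B) :
    TensorProduct.map (twistedMul f) (twistedMul g) ∘ₗ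
        (TensorProduct.tensorTensorTensorComm R A B A B).toLinearMap =
      twistedMul (TensorProduct.map f g) := by
  ext a a' b b'
  simp

end Algebra

section Bialgebra

variable {R H : Type*} [CommSemiring R] [Semiring H] [Bialgebra R H] (q : H →ₗc[R] H)

theorem comul_comp_twistedMul :
    comul ∘ₗ twistedMul (q : H →ₗ[R] H) =
      TensorProduct.map (twistedMul q) (twistedMul q) ∘ₗ
        (TensorProduct.tensorTensorTensorComm R H H H H).toLinearMap ∘ₗ
        TensorProduct.map comul comul := by
  rw [← LinearMap.comp_assoc, map_twistedMul_comp_tensorTensorTensorComm]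
  ext a b
  simp [CoalgHomClass.map_comp_comul_apply]

theorem counit_comp_twistedMul :
    counit ∘ₗ twistedMul (q : H →ₗ[R] H) =
      (TensorProduct.lid R R).toLinearMap ∘ₗ TensorProduct.map counit counit := by
  ext a b
  simp

end Bialgebra

theorem Coalgebra.sum_counit_right_smul {R A ι : Type*} [CommSemiring R] [AddCommMonoid A]
    [Module R A] [Coalgebra R A] {a : A} (ra : Repr R a ι) :
    ∑ i ∈ ra.index, counit (R := R) (ra.right i) • ra.left i = a := by
  simpa only [map_sum, _root_.TensorProduct.rid_tmul, one_smul]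
    using congr(_root_.TensorProduct.rid R A $(sum_tmul_counit_eq ra))

/-- In Sweedler notation: `λ(q a₁) (q(a₂) c) = ε(a) c`. -/
theorem mul'_map_antipode_twistedMul_assoc_comul_tmul {R H : Type*} [CommSemiring R] [Semiring H]
    [HopfAlgebra R H] (q : H →ₗc[R] H) (a c : H) :
    LinearMap.mul' R H (TensorProduct.map (HopfAlgebra.antipode R ∘ₗ (q : H →ₗ[R] H))
        (twistedMul q) (TensorProduct.assoc R H H H (comul a ⊗ₜ c))) =
      counit (R := R) a • c := by
  let ra := ℛ R a
  have hS := HopfAlgebra.sum_antipode_mul_eq_smul (ra.induced q)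
  simp only [Repr.induced_index, Repr.induced_left, Repr.induced_right, Function.comp_apply,
    CoalgHomClass.counit_comp_apply] at hS
  rw [← ra.eq]
  simp [TensorProduct.sum_tmul, ← mul_assoc, ← Finset.sum_mul, hS]

theorem twistedMul_comp_mul'_eq_trussRHS {k H : Type*} [Field k] [Ring H] [HopfAlgebra k H]
    (q : H →ₗc[k] H) :
    twistedMul (q : H →ₗ[k] H) ∘ₗ TensorProduct.map LinearMap.id (LinearMap.mul' k H) =
      trussRHS k q (twistedMul q) := by
  ext a b c
  let ra := ℛ k a
  simp only [trussRHS, AlgebraTensorModule.curry_apply, curry_apply, LinearMap.coe_restrictScalars,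
    LinearMap.comp_apply, map_tmul, LinearMap.id_apply, LinearMap.mul'_apply, twistedMul_tmul]
  rw [← ra.eq]
  simp only [LinearMap.coe_coe, map_sum, map_tmul, LinearMap.id_coe, id_eq, sum_tmul,
    LinearEquiv.coe_coe, tensorTensorTensorComm_tmul, twistedMul_tmul, LinearMap.coe_comp,
    Function.comp_apply, mul'_map_antipode_twistedMul_assoc_comul_tmul, tmul_smul, map_smul,
    LinearMap.mul'_apply]
  conv_lhs => rw [← sum_counit_right_smul ra]
  simp [Finset.sum_mul, mul_assoc]

theorem stmt18_general (k H : Type*) [Field k] [Ring H] [HopfAlgebra k H]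
    (q : H →ₗ[k] H)
    (hq_mul : ∀ a b : H, q (a * b) = q a * q b)
    (hq_comul : Coalgebra.comul ∘ₗ q = TensorProduct.map q q ∘ₗ Coalgebra.comul)
    (hq_counit : Coalgebra.counit ∘ₗ q = Coalgebra.counit)
    (hqq : q ∘ₗ q = q) :
    let ρ : H ⊗[k] H →ₗ[k] H := (LinearMap.mul' k H) ∘ₗ TensorProduct.map q LinearMap.id
    (ρ ∘ₗ TensorProduct.map LinearMap.id (LinearMap.mul' k H) = trussRHS k q ρ) ∧
    (ρ ∘ₗ TensorProduct.map LinearMap.id ρ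
      = ρ ∘ₗ TensorProduct.map ρ LinearMap.id ∘ₗ
          (TensorProduct.assoc k H H H).symm.toLinearMap) ∧
    (Coalgebra.comul ∘ₗ ρ
      = (TensorProduct.map ρ ρ) ∘ₗ
          (TensorProduct.tensorTensorTensorComm k H H H H).toLinearMap ∘ₗ
          (TensorProduct.map Coalgebra.comul Coalgebra.comul)) ∧
    (Coalgebra.counit ∘ₗ ρ
      = (TensorProduct.lid k k).toLinearMap ∘ₗ
          TensorProduct.map Coalgebra.counit Coalgebra.counit) := by
  let qc : H →ₗc[k] H := { q with counit_comp := hq_counit, map_comp_comul := hq_comul.symm }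
  exact ⟨twistedMul_comp_mul'_eq_trussRHS qc, twistedMul_assoc q hq_mul hqq,
    comul_comp_twistedMul qc, counit_comp_twistedMul qc⟩

theorem stmt18 (k H : Type*) [Field k] [Ring H] [HopfAlgebra k H]
    (hcoc : ∀ a : H, (TensorProduct.comm k H H) (Coalgebra.comul (R := k) a)
      = Coalgebra.comul a)
    (q : H →ₗ[k] H)
    (hq_mul : ∀ a b : H, q (a * b) = q a * q b)
    (hq_one : q 1 = 1)
    (hq_comul : Coalgebra.comul ∘ₗ q = TensorProduct.map q q ∘ₗ Coalgebra.comul)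
    (hq_counit : Coalgebra.counit ∘ₗ q = Coalgebra.counit)
    (hqq : q ∘ₗ q = q) :
    let ρ : H ⊗[k] H →ₗ[k] H := (LinearMap.mul' k H) ∘ₗ TensorProduct.map q LinearMap.id
    (ρ ∘ₗ TensorProduct.map LinearMap.id (LinearMap.mul' k H) = trussRHS k q ρ) ∧
    (ρ ∘ₗ TensorProduct.map LinearMap.id ρ
      = ρ ∘ₗ TensorProduct.map ρ LinearMap.id ∘ₗ
          (TensorProduct.assoc k H H H).symm.toLinearMap) ∧
    (Coalgebra.comul ∘ₗ ρ
      = (TensorProduct.map ρ ρ) ∘ₗ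
          (TensorProduct.tensorTensorTensorComm k H H H H).toLinearMap ∘ₗ
          (TensorProduct.map Coalgebra.comul Coalgebra.comul)) ∧
    (Coalgebra.counit ∘ₗ ρ
      = (TensorProduct.lid k k).toLinearMap ∘ₗ
          TensorProduct.map Coalgebra.counit Coalgebra.counit) :=
  stmt18_general k H q hq_mul hq_comul hq_counit hqq
end
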